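/- arXiv:1801.02856 — 8 statements merged into one kernel-verified Lean document; each statement's English description precedes it below -/
import Mathlib

section
/- Let a > 0 and p ∈ ℝ be fixed. For every γ > 0 there exist ε > 0 and M > 0 such that the following holds: for every continuous function c : [0,1]×[0,∞) → ℝ with |c(x,t)| < ε for all (x,t), and every twice continuously differentiable function w : [0,1]×[0,∞) → ℝ satisfying ∂²_t w − a² ∂²_x w + c·w = 0 on (0,1)×(0,∞), together with the boundary conditions w(0,t) = p·(∂_t w + a ∂_x w)(0,t) and (∂_t w + a ∂_x w)(1,t) = 0 for all t > 0, one has for all t > 0: (∫_0^1 w(x,t)² dx)^{1/2} ≤ M e^{−γ t} · max{ (∫_0^1 [w(x,0)² + (∂_x w(x,0))²] dx)^{1/2}, (∫_0^1 (∂_t w(x,0))² dx)^{1/2} }. -/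
/-!
With the Riemann invariant `u = wₜ + a wₓ` the equation becomes the first-order system
`wₜ = u - a wₓ`, `uₜ = a uₓ - c w` (the second identity uses the symmetry of the mixed partials
and extends to `x = 0, 1` by continuity). For the weighted energy
`V(t) = ∫₀¹ (A e^{-μx} w² + e^{μx} u²) dx`, an integration by parts gives
`V' = ∫₀¹ (2A e^{-μx} w u - 2 e^{μx} c u w) - aμ V + [a (e^{μx} u² - A e^{-μx} w²)]₀¹`.
The boundary conditions `u(1) = 0`, `w(0) = p u(0)` make the bracket nonpositive once `A p² ≤ 1`,
and with `aμ = 4γ`, `A ≤ γ²`, `ε e^{2μ} ≤ γ A` the first integral is at most `2γ V`. Hence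
`V(t) ≤ V(0) e^{-2γt}`, and the theorem follows from `A ‖w(t)‖² ≤ e^μ V(t)` and
`V(0) ≤ (2 + 2a²) e^μ (‖w(0)‖²_{H¹} + ‖wₜ(0)‖²)`.
-/

open MeasureTheory Set Real Function

theorem hasDerivAt_intervalIntegral_of_continuous {F F' : ℝ → ℝ → ℝ} {a b : ℝ}
    (hF : Continuous (uncurry F)) (hF' : Continuous (uncurry F'))
    (hd : ∀ s x, HasDerivAt (fun r => F r x) (F' s x) s) (t : ℝ) :
    HasDerivAt (fun s => ∫ x in a..b, F s x) (∫ x in a..b, F' t x) t := by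
  obtain ⟨C, hC⟩ := ((isCompact_closedBall t 1).prod (isCompact_uIcc (a := a) (b := b))
    ).exists_bound_of_continuousOn hF'.continuousOn
  refine (intervalIntegral.hasDerivAt_integral_of_dominated_loc_of_deriv_le
    (bound := fun _ => C) (Metric.closedBall_mem_nhds t one_pos)
    (.of_forall fun s => (hF.along_snd (x := s)).aestronglyMeasurable)
    (hF.along_snd.intervalIntegrable a b) hF'.along_snd.aestronglyMeasurable
    (.of_forall fun x hx s hs => hC (s, x) ⟨hs, uIoc_subset_uIcc hx⟩)
    intervalIntegrable_const (.of_forall fun x _ s _ => hd s x)).2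

theorem le_mul_exp_of_hasDerivAt_le {V V' : ℝ → ℝ} {k : ℝ} (hc : ContinuousOn V (Ici 0))
    (hd : ∀ s > 0, HasDerivAt V (V' s) s) (hle : ∀ s > 0, V' s ≤ -k * V s) {t : ℝ}
    (ht : 0 ≤ t) : V t ≤ V 0 * exp (-(k * t)) := by
  have hanti : AntitoneOn (fun s => V s * exp (k * s)) (Ici 0) := by
    have hd' : ∀ s > 0, HasDerivAt (fun s => V s * exp (k * s))
        ((V' s + k * V s) * exp (k * s)) s := fun s hs => by
      have he : HasDerivAt (fun s => exp (k * s)) (exp (k * s) * k) s := by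
        simpa using ((hasDerivAt_id s).const_mul k).exp
      exact ((hd s hs).mul he).congr_deriv (by ring)
    refine antitoneOn_of_deriv_nonpos (convex_Ici 0)
      (hc.mul (continuous_exp.comp (continuous_const_mul k)).continuousOn) ?_ ?_
    · rw [interior_Ici]
      exact fun s hs => (hd' s hs).differentiableAt.differentiableWithinAt
    · rw [interior_Ici]
      intro s hs
      rw [(hd' s hs).deriv]
      exact mul_nonpos_of_nonpos_of_nonneg (by linarith [hle s hs]) (exp_pos _).le
  have := hanti self_mem_Ici ht ht
  simp only [mul_zero, exp_zero, mul_one] at this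
  rw [exp_neg, ← div_eq_mul_inv, le_div_iff₀ (exp_pos _)]
  exact this

theorem sqrt_le_mul_exp_mul_max {I J₁ J₂ A B γ t : ℝ} (hA : 0 < A) (hB : 0 ≤ B)
    (hJ₁ : 0 ≤ J₁) (hJ₂ : 0 ≤ J₂) (h : A * I ≤ B * exp (-(2 * γ * t)) * (J₁ + J₂)) :
    √I ≤ √(2 * B / A) * exp (-γ * t) * max √J₁ √J₂ := by
  set S := max √J₁ √J₂
  have hS₁ : J₁ ≤ S ^ 2 := by
    rw [← sq_sqrt hJ₁]; exact pow_le_pow_left₀ (sqrt_nonneg _) (le_max_left _ _) 2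
  have hS₂ : J₂ ≤ S ^ 2 := by
    rw [← sq_sqrt hJ₂]; exact pow_le_pow_left₀ (sqrt_nonneg _) (le_max_right _ _) 2
  have hexp : exp (-γ * t) ^ 2 = exp (-(2 * γ * t)) := by rw [← exp_nat_mul]; ring_nf
  rw [sqrt_le_left (by positivity), mul_pow, mul_pow, sq_sqrt (by positivity), hexp]
  rw [← mul_le_mul_iff_right₀ hA]
  calc A * I ≤ B * exp (-(2 * γ * t)) * (J₁ + J₂) := h
    _ ≤ B * exp (-(2 * γ * t)) * (2 * S ^ 2) := by gcongr; linarith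
    _ = A * (2 * B / A * exp (-(2 * γ * t)) * S ^ 2) := by field_simp

section PartialDerivatives

variable {f : ℝ × ℝ → ℝ}

noncomputable def partialX (f : ℝ × ℝ → ℝ) (q : ℝ × ℝ) : ℝ := fderiv ℝ f q (1, 0)

noncomputable def partialT (f : ℝ × ℝ → ℝ) (q : ℝ × ℝ) : ℝ := fderiv ℝ f q (0, 1)

theorem hasDerivAt_partialX {x t : ℝ} (hf : DifferentiableAt ℝ f (x, t)) :
    HasDerivAt (fun y => f (y, t)) (partialX f (x, t)) x :=
  hf.hasFDerivAt.comp_hasDerivAt x ((hasDerivAt_id x).prodMk (hasDerivAt_const x t))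

theorem hasDerivAt_partialT {x t : ℝ} (hf : DifferentiableAt ℝ f (x, t)) :
    HasDerivAt (fun s => f (x, s)) (partialT f (x, t)) t :=
  hf.hasFDerivAt.comp_hasDerivAt t ((hasDerivAt_const t x).prodMk (hasDerivAt_id t))

theorem ContDiff.partialX {n : WithTop ℕ∞} (hf : ContDiff ℝ (n + 1) f) :
    ContDiff ℝ n (partialX f) :=
  (hf.fderiv_right le_rfl).clm_apply contDiff_const

theorem ContDiff.partialT {n : WithTop ℕ∞} (hf : ContDiff ℝ (n + 1) f) :
    ContDiff ℝ n (partialT f) :=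
  (hf.fderiv_right le_rfl).clm_apply contDiff_const

theorem deriv_eq_partialX {w : ℝ → ℝ → ℝ} (hw : Differentiable ℝ (uncurry w)) (x t : ℝ) :
    deriv (fun y => w y t) x = partialX (uncurry w) (x, t) :=
  (hasDerivAt_partialX (hw _)).deriv

theorem deriv_eq_partialT {w : ℝ → ℝ → ℝ} (hw : Differentiable ℝ (uncurry w)) (x t : ℝ) :
    deriv (w x) t = partialT (uncurry w) (x, t) :=
  (hasDerivAt_partialT (hw _)).deriv

theorem deriv_deriv_eq_partialX_partialX {w : ℝ → ℝ → ℝ} (hw : ContDiff ℝ 2 (uncurry w))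
    (x t : ℝ) :
    deriv (fun y => deriv (fun z => w z t) y) x = partialX (partialX (uncurry w)) (x, t) := by
  simp only [deriv_eq_partialX (hw.differentiable two_ne_zero)]
  exact (hasDerivAt_partialX ((hw.partialX (n := 1)).differentiable one_ne_zero _)).deriv

theorem deriv_deriv_eq_partialT_partialT {w : ℝ → ℝ → ℝ} (hw : ContDiff ℝ 2 (uncurry w))
    (x t : ℝ) : deriv (deriv (w x)) t = partialT (partialT (uncurry w)) (x, t) := by
  have : deriv (w x) = fun s => partialT (uncurry w) (x, s) :=
    funext (deriv_eq_partialT (hw.differentiable two_ne_zero) x)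
  rw [this]
  exact (hasDerivAt_partialT ((hw.partialT (n := 1)).differentiable one_ne_zero _)).deriv

theorem hasFDerivAt_fderiv_apply {q : ℝ × ℝ} (hf : DifferentiableAt ℝ (fderiv ℝ f) q)
    (v : ℝ × ℝ) :
    HasFDerivAt (fun q => fderiv ℝ f q v)
      ((ContinuousLinearMap.apply ℝ ℝ v).comp (fderiv ℝ (fderiv ℝ f) q)) q :=
  (ContinuousLinearMap.apply ℝ ℝ v).hasFDerivAt.comp q hf.hasFDerivAt

noncomputable def riemannInvariant (a : ℝ) (f : ℝ × ℝ → ℝ) (q : ℝ × ℝ) : ℝ :=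
  partialT f q + a * partialX f q

theorem riemannInvariant_uncurry {a x t : ℝ} {w : ℝ → ℝ → ℝ}
    (hw : Differentiable ℝ (uncurry w)) :
    riemannInvariant a (uncurry w) (x, t) = deriv (w x) t + a * deriv (fun y => w y t) x := by
  rw [riemannInvariant, deriv_eq_partialT hw, deriv_eq_partialX hw]

theorem ContDiff.riemannInvariant {n : WithTop ℕ∞} (hf : ContDiff ℝ (n + 1) f) (a : ℝ) :
    ContDiff ℝ n (riemannInvariant a f) :=
  hf.partialT.add (contDiff_const.mul hf.partialX)

theorem partialT_riemannInvariant_sub (hf : ContDiff ℝ 2 f) (a : ℝ) (q : ℝ × ℝ) :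
    partialT (riemannInvariant a f) q - a * partialX (riemannInvariant a f) q
      = partialT (partialT f) q - a ^ 2 * partialX (partialX f) q := by
  have hD : DifferentiableAt ℝ (fderiv ℝ f) q :=
    (hf.fderiv_right (m := 1) (by norm_num)).differentiable one_ne_zero q
  have hT : HasFDerivAt (partialT f) _ q := hasFDerivAt_fderiv_apply hD (0, 1)
  have hX : HasFDerivAt (partialX f) _ q := hasFDerivAt_fderiv_apply hD (1, 0)
  have hU : HasFDerivAt (riemannInvariant a f) _ q := hT.add (hX.const_mul a)
  have hsymm := (hf.contDiffAt (x := q)).isSymmSndFDerivAt (by simp) (0, 1) (1, 0)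
  unfold partialT partialX at *
  rw [hU.fderiv, hT.fderiv, hX.fderiv]
  simp only [add_apply, FunLike.coe_smul, Pi.smul_apply, smul_eq_mul,
    ContinuousLinearMap.comp_apply, ContinuousLinearMap.apply_apply, hsymm]
  ring

theorem partialT_riemannInvariant_eq {a t : ℝ} {c : ℝ × ℝ → ℝ} (hf : ContDiff ℝ 2 f)
    (hc : Continuous c)
    (heq : ∀ x ∈ Ioo (0:ℝ) 1, partialT (partialT f) (x, t)
      - a ^ 2 * partialX (partialX f) (x, t) + c (x, t) * f (x, t) = 0) :
    ∀ x ∈ Icc (0:ℝ) 1, partialT (riemannInvariant a f) (x, t)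
      = a * partialX (riemannInvariant a f) (x, t) - c (x, t) * f (x, t) := by
  have hU : ContDiff ℝ 1 (riemannInvariant a f) := hf.riemannInvariant a
  have hIoo : EqOn (fun x => partialT (riemannInvariant a f) (x, t))
      (fun x => a * partialX (riemannInvariant a f) (x, t) - c (x, t) * f (x, t)) (Ioo 0 1) :=
    fun x hx => by linear_combination partialT_riemannInvariant_sub hf a (x, t) + heq x hx
  rw [← closure_Ioo zero_ne_one]
  exact hIoo.closure (hU.partialT (n := 0)).continuous.along_fst
    ((continuous_const.mul (hU.partialX (n := 0)).continuous.along_fst).sub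
      (hc.along_fst.mul hf.continuous.along_fst))

end PartialDerivatives

theorem cross_terms_le_two_mul_energy_density {A γ ε c w u e e' : ℝ} (hγ : 0 < γ) (hA : 0 ≤ A)
    (hAγ : A ≤ γ ^ 2) (he : 0 < e) (hee' : e ≤ e') (hc : |c| ≤ ε) (hεγ : ε ≤ γ)
    (hε : ε * e' ≤ γ * A * e) :
    2 * A * e * w * u - 2 * e' * c * u * w ≤ 2 * γ * (A * e * w ^ 2 + e' * u ^ 2) := by
  have hcoupling : 2 * A * e * w * u ≤ γ * A * e * w ^ 2 + γ * e' * u ^ 2 := by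
    have h : γ * (2 * A * e * w * u) ≤ γ * (γ * A * e * w ^ 2 + γ * e' * u ^ 2) := by
      nlinarith [mul_nonneg (mul_nonneg hA he.le) (sq_nonneg (γ * w - u)),
        mul_nonneg (sub_nonneg.2 hAγ) (mul_nonneg he.le (sq_nonneg u)),
        mul_nonneg (sq_nonneg γ) (mul_nonneg (sub_nonneg.2 hee') (sq_nonneg u))]
    exact le_of_mul_le_mul_left h hγ
  have hperturb : -(2 * e' * c * u * w) ≤ γ * A * e * w ^ 2 + γ * e' * u ^ 2 := by
    obtain ⟨hc₁, hc₂⟩ := abs_le.1 hc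
    have he' : 0 < e' := he.trans_le hee'
    nlinarith [mul_nonneg he'.le (mul_nonneg (neg_le_iff_add_nonneg'.1 hc₁) (sq_nonneg (u + w))),
      mul_nonneg he'.le (mul_nonneg (sub_nonneg.2 hc₂) (sq_nonneg (u - w))),
      mul_nonneg (sub_nonneg.2 hεγ) (mul_nonneg he'.le (sq_nonneg u)),
      mul_nonneg (sub_nonneg.2 hε) (sq_nonneg w)]
  linarith

theorem interior_energy_rate_le {a γ μ A ε c w u x : ℝ} (hγ : 0 < γ) (hμ : 0 ≤ μ)
    (haμ : 4 * γ ≤ a * μ) (hA : 0 ≤ A) (hA₁ : A ≤ 1) (hAγ : A ≤ γ ^ 2)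
    (hε : ε * exp (2 * μ) ≤ γ * A) (hc : |c| ≤ ε) (hx : x ∈ Icc (0:ℝ) 1) :
    2 * A * exp (-(μ * x)) * w * u - 2 * exp (μ * x) * c * u * w
        - a * μ * (A * exp (-(μ * x)) * w ^ 2 + exp (μ * x) * u ^ 2)
      ≤ -(2 * γ) * (A * exp (-(μ * x)) * w ^ 2 + exp (μ * x) * u ^ 2) := by
  have hμx : 0 ≤ μ * x := mul_nonneg hμ hx.1
  have hε₀ : 0 ≤ ε := (abs_nonneg c).trans hc
  have hεγ : ε ≤ γ := calc
    ε ≤ ε * exp (2 * μ) := le_mul_of_one_le_right hε₀ (one_le_exp (by positivity))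
    _ ≤ γ * A := hε
    _ ≤ γ := mul_le_of_le_one_right hγ.le hA₁
  have hweights : ε * exp (μ * x) ≤ γ * A * exp (-(μ * x)) := calc
    ε * exp (μ * x) = ε * exp (2 * (μ * x)) * exp (-(μ * x)) := by
      rw [mul_assoc, ← exp_add]; ring_nf
    _ ≤ γ * A * exp (-(μ * x)) := by
      refine mul_le_mul_of_nonneg_right (le_trans ?_ hε) (exp_pos _).le
      gcongr
      nlinarith [hx.2]
  have hcross := cross_terms_le_two_mul_energy_density (w := w) (u := u) hγ hA hAγ (exp_pos _)
    (exp_le_exp.2 (by linarith)) hc hεγ hweights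
  have hΦ : 0 ≤ A * exp (-(μ * x)) * w ^ 2 + exp (μ * x) * u ^ 2 := by positivity
  nlinarith

theorem hasDerivAt_exp_mul_sq {f f' : ℝ → ℝ} {κ x : ℝ} (hf : HasDerivAt f (f' x) x) :
    HasDerivAt (fun y => exp (κ * y) * f y ^ 2)
      (exp (κ * x) * (κ * f x ^ 2 + 2 * f x * f' x)) x := by
  have he : HasDerivAt (fun y => exp (κ * y)) (exp (κ * x) * κ) x := by
    simpa using ((hasDerivAt_id x).const_mul κ).exp
  exact (he.mul (hf.fun_pow 2)).congr_deriv (by ring)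

noncomputable def weightedEnergy (A μ : ℝ) (w u : ℝ → ℝ) : ℝ :=
  ∫ x in (0:ℝ)..1, (A * exp (-(μ * x)) * w x ^ 2 + exp (μ * x) * u x ^ 2)

theorem hasDerivAt_weightedEnergy {A μ : ℝ} {f g : ℝ × ℝ → ℝ} (hf : ContDiff ℝ 1 f)
    (hg : ContDiff ℝ 1 g) (t : ℝ) :
    HasDerivAt (fun s => weightedEnergy A μ (fun x => f (x, s)) (fun x => g (x, s)))
      (∫ x in (0:ℝ)..1, (A * exp (-(μ * x)) * (2 * f (x, t) * partialT f (x, t))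
        + exp (μ * x) * (2 * g (x, t) * partialT g (x, t)))) t := by
  have hf' : Continuous (partialT f) := (hf.partialT (n := 0)).continuous
  have hg' : Continuous (partialT g) := (hg.partialT (n := 0)).continuous
  have hfc := hf.continuous
  have hgc := hg.continuous
  refine hasDerivAt_intervalIntegral_of_continuous
    (F := fun s x => A * exp (-(μ * x)) * f (x, s) ^ 2 + exp (μ * x) * g (x, s) ^ 2)
    (F' := fun s x => A * exp (-(μ * x)) * (2 * f (x, s) * partialT f (x, s))
      + exp (μ * x) * (2 * g (x, s) * partialT g (x, s)))
    (by simp only [uncurry_def]; fun_prop) (by simp only [uncurry_def]; fun_prop)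
    (fun s x => ?_) t
  have hdf := (hasDerivAt_partialT (hf.differentiable one_ne_zero (x, s))).fun_pow 2
  have hdg := (hasDerivAt_partialT (hg.differentiable one_ne_zero (x, s))).fun_pow 2
  exact ((hdf.const_mul _).add (hdg.const_mul _)).congr_deriv (by ring)

theorem integral_weightedEnergy_deriv_le {a p γ μ A ε : ℝ} {w u w' u' wt ut c : ℝ → ℝ}
    (ha : 0 ≤ a) (hγ : 0 < γ) (hμ : 0 ≤ μ) (haμ : 4 * γ ≤ a * μ) (hA : 0 ≤ A) (hA₁ : A ≤ 1)
    (hAγ : A ≤ γ ^ 2) (hAp : A * p ^ 2 ≤ 1) (hε : ε * exp (2 * μ) ≤ γ * A)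
    (hw : ∀ x, HasDerivAt w (w' x) x) (hu : ∀ x, HasDerivAt u (u' x) x)
    (hw' : Continuous w') (hu' : Continuous u') (hc : Continuous c)
    (hcε : ∀ x ∈ Icc (0:ℝ) 1, |c x| ≤ ε)
    (hwt : ∀ x ∈ Icc (0:ℝ) 1, wt x = u x - a * w' x)
    (hut : ∀ x ∈ Icc (0:ℝ) 1, ut x = a * u' x - c x * w x)
    (h₀ : w 0 = p * u 0) (h₁ : u 1 = 0) :
    ∫ x in (0:ℝ)..1, (A * exp (-(μ * x)) * (2 * w x * wt x) + exp (μ * x) * (2 * u x * ut x))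
      ≤ -(2 * γ) * weightedEnergy A μ w u := by
  have hwc : Continuous w := continuous_iff_continuousAt.2 fun x => (hw x).continuousAt
  have huc : Continuous u := continuous_iff_continuousAt.2 fun x => (hu x).continuousAt
  set Φ := fun x => A * exp (-(μ * x)) * w x ^ 2 + exp (μ * x) * u x ^ 2 with hΦ
  set G := fun x => 2 * A * exp (-(μ * x)) * w x * u x
    - 2 * exp (μ * x) * c x * u x * w x - a * μ * Φ x with hG
  set flux := fun x => a * (exp (μ * x) * u x ^ 2 - A * (exp (-μ * x) * w x ^ 2)) with hflux
  set flux' := fun x => a * (exp (μ * x) * (μ * u x ^ 2 + 2 * u x * u' x)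
    - A * (exp (-μ * x) * (-μ * w x ^ 2 + 2 * w x * w' x))) with hflux'
  have hflux_deriv : ∀ x, HasDerivAt flux (flux' x) x := fun x =>
    (((hasDerivAt_exp_mul_sq (hu x)).sub
      ((hasDerivAt_exp_mul_sq (hw x)).const_mul A)).const_mul a)
  have hsplit : EqOn (fun x => A * exp (-(μ * x)) * (2 * w x * wt x)
      + exp (μ * x) * (2 * u x * ut x)) (fun x => G x + flux' x) (uIcc 0 1) := by
    intro x hx
    rw [uIcc_of_le zero_le_one] at hx
    simp only [hG, hΦ, hflux', hwt x hx, hut x hx, neg_mul]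
    ring
  have hG_le : ∀ x ∈ Icc (0:ℝ) 1, G x ≤ -(2 * γ) * Φ x := fun x hx =>
    interior_energy_rate_le hγ hμ haμ hA hA₁ hAγ hε (hcε x hx) hx
  have hbdry : flux 1 - flux 0 ≤ 0 := by
    have hw₁ : 0 ≤ A * (exp (-μ) * w 1 ^ 2) := by positivity
    have hu₀ : 0 ≤ (1 - A * p ^ 2) * u 0 ^ 2 := mul_nonneg (by linarith) (sq_nonneg _)
    simp only [hflux, h₀, h₁, mul_one, mul_zero, exp_zero]
    nlinarith
  have hGc : Continuous G := by fun_prop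
  have hΦc : Continuous Φ := by fun_prop
  have hflux'c : Continuous flux' := by fun_prop
  calc _ = (∫ x in (0:ℝ)..1, G x) + ∫ x in (0:ℝ)..1, flux' x := by
        rw [intervalIntegral.integral_congr hsplit,
          intervalIntegral.integral_add (hGc.intervalIntegrable 0 1)
            (hflux'c.intervalIntegrable 0 1)]
    _ = (∫ x in (0:ℝ)..1, G x) + (flux 1 - flux 0) := by
        rw [intervalIntegral.integral_eq_sub_of_hasDerivAt (fun x _ => hflux_deriv x)
          (hflux'c.intervalIntegrable 0 1)]
    _ ≤ (∫ x in (0:ℝ)..1, -(2 * γ) * Φ x) + 0 :=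
        add_le_add (intervalIntegral.integral_mono_on zero_le_one (hGc.intervalIntegrable 0 1)
          ((continuous_const.mul hΦc).intervalIntegrable 0 1) hG_le) hbdry
    _ = -(2 * γ) * weightedEnergy A μ w u := by
        rw [intervalIntegral.integral_const_mul, add_zero, weightedEnergy]

theorem weightedEnergy_riemannInvariant_le_mul_exp {a p γ μ A ε t : ℝ} {f c : ℝ × ℝ → ℝ}
    (hf : ContDiff ℝ 2 f) (hc : Continuous c) (ha : 0 ≤ a) (hγ : 0 < γ) (hμ : 0 ≤ μ)
    (haμ : 4 * γ ≤ a * μ) (hA : 0 ≤ A) (hA₁ : A ≤ 1) (hAγ : A ≤ γ ^ 2) (hAp : A * p ^ 2 ≤ 1)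
    (hε : ε * exp (2 * μ) ≤ γ * A) (hcε : ∀ x ∈ Icc (0:ℝ) 1, ∀ s > 0, |c (x, s)| ≤ ε)
    (heq : ∀ x ∈ Ioo (0:ℝ) 1, ∀ s > 0, partialT (partialT f) (x, s)
      - a ^ 2 * partialX (partialX f) (x, s) + c (x, s) * f (x, s) = 0)
    (h₀ : ∀ s > 0, f (0, s) = p * riemannInvariant a f (0, s))
    (h₁ : ∀ s > 0, riemannInvariant a f (1, s) = 0) (ht : 0 ≤ t) :
    weightedEnergy A μ (fun x => f (x, t)) (fun x => riemannInvariant a f (x, t))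
      ≤ weightedEnergy A μ (fun x => f (x, 0)) (fun x => riemannInvariant a f (x, 0))
        * exp (-(2 * γ * t)) := by
  have hf₁ : ContDiff ℝ 1 f := hf.of_le (by norm_num)
  have hU : ContDiff ℝ 1 (riemannInvariant a f) := hf.riemannInvariant a
  refine le_mul_exp_of_hasDerivAt_le
    (fun s _ => (hasDerivAt_weightedEnergy hf₁ hU s).continuousAt.continuousWithinAt)
    (fun s _ => hasDerivAt_weightedEnergy hf₁ hU s) (fun s hs => ?_) ht
  exact integral_weightedEnergy_deriv_le ha hγ hμ haμ hA hA₁ hAγ hAp hε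
    (fun x => hasDerivAt_partialX (hf₁.differentiable one_ne_zero _))
    (fun x => hasDerivAt_partialX (hU.differentiable one_ne_zero _))
    (hf.partialX (n := 1)).continuous.along_fst
    (hU.partialX (n := 0)).continuous.along_fst
    hc.along_fst (fun x hx => hcε x hx s hs) (fun x _ => by rw [riemannInvariant]; ring)
    (partialT_riemannInvariant_eq hf hc fun x hx => heq x hx s hs) (h₀ s hs) (h₁ s hs)

theorem mul_integral_sq_le_weightedEnergy {A μ : ℝ} {w u : ℝ → ℝ} (hA : 0 ≤ A) (hμ : 0 ≤ μ)
    (hw : Continuous w) (hu : Continuous u) :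
    A * ∫ x in (0:ℝ)..1, w x ^ 2 ≤ exp μ * weightedEnergy A μ w u := by
  rw [weightedEnergy, ← intervalIntegral.integral_const_mul, ← intervalIntegral.integral_const_mul]
  refine intervalIntegral.integral_mono_on zero_le_one
    (Continuous.intervalIntegrable (by fun_prop) 0 1)
    (Continuous.intervalIntegrable (by fun_prop) 0 1) ?_
  rintro x ⟨-, hx₁⟩
  have hweight : 1 ≤ exp μ * exp (-(μ * x)) := by
    rw [← exp_add]
    exact one_le_exp (by nlinarith)
  have hu₀ : 0 ≤ exp μ * (exp (μ * x) * u x ^ 2) := by positivity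
  nlinarith [mul_le_mul_of_nonneg_left hweight (mul_nonneg hA (sq_nonneg (w x)))]

theorem weightedEnergy_le_mul_integral_sq {A μ a : ℝ} {w wx wt : ℝ → ℝ} (hA : A ≤ 1) (hμ : 0 ≤ μ)
    (hw : Continuous w) (hwx : Continuous wx) (hwt : Continuous wt) :
    weightedEnergy A μ w (fun x => wt x + a * wx x) ≤ (2 + 2 * a ^ 2) * exp μ *
      ((∫ x in (0:ℝ)..1, (w x ^ 2 + wx x ^ 2)) + ∫ x in (0:ℝ)..1, wt x ^ 2) := by
  rw [weightedEnergy, ← intervalIntegral.integral_add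
    (Continuous.intervalIntegrable (by fun_prop) 0 1)
    (Continuous.intervalIntegrable (by fun_prop) 0 1), ← intervalIntegral.integral_const_mul]
  refine intervalIntegral.integral_mono_on zero_le_one
    (Continuous.intervalIntegrable (by fun_prop) 0 1)
    (Continuous.intervalIntegrable (by fun_prop) 0 1) ?_
  rintro x ⟨hx₀, hx₁⟩
  have hA' : A * exp (-(μ * x)) ≤ 1 := by
    have : exp (-(μ * x)) ≤ 1 := exp_le_one_iff.2 (by nlinarith)
    nlinarith [exp_pos (-(μ * x))]
  have hsq : (wt x + a * wx x) ^ 2 ≤ 2 * wt x ^ 2 + 2 * a ^ 2 * wx x ^ 2 := by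
    nlinarith [sq_nonneg (wt x - a * wx x)]
  have hexp : 1 ≤ exp μ := one_le_exp hμ
  calc A * exp (-(μ * x)) * w x ^ 2 + exp (μ * x) * (wt x + a * wx x) ^ 2
      ≤ 1 * w x ^ 2 + exp μ * (2 * wt x ^ 2 + 2 * a ^ 2 * wx x ^ 2) := by
        gcongr
        nlinarith
    _ ≤ (2 + 2 * a ^ 2) * exp μ * (w x ^ 2 + wx x ^ 2 + wt x ^ 2) := by
        nlinarith [sq_nonneg (w x), sq_nonneg (wx x), sq_nonneg (wt x), sq_nonneg a,
          mul_nonneg (sq_nonneg a) (sq_nonneg (wt x)), mul_nonneg (sq_nonneg a) (sq_nonneg (w x))]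

theorem mul_integral_sq_le_of_weightedEnergy_le {a μ A γ t : ℝ} {f : ℝ × ℝ → ℝ}
    (hf : ContDiff ℝ 2 f) (hμ : 0 ≤ μ) (hA : 0 ≤ A) (hA₁ : A ≤ 1)
    (hdecay : weightedEnergy A μ (fun x => f (x, t)) (fun x => riemannInvariant a f (x, t))
      ≤ weightedEnergy A μ (fun x => f (x, 0)) (fun x => riemannInvariant a f (x, 0))
        * exp (-(2 * γ * t))) :
    A * ∫ x in (0:ℝ)..1, f (x, t) ^ 2 ≤ exp μ * ((2 + 2 * a ^ 2) * exp μ) * exp (-(2 * γ * t))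
      * ((∫ x in (0:ℝ)..1, (f (x, 0) ^ 2 + partialX f (x, 0) ^ 2))
        + ∫ x in (0:ℝ)..1, partialT f (x, 0) ^ 2) := by
  have hU := (hf.riemannInvariant (n := 1) a).continuous
  calc A * ∫ x in (0:ℝ)..1, f (x, t) ^ 2
      ≤ exp μ * weightedEnergy A μ (fun x => f (x, t)) (fun x => riemannInvariant a f (x, t)) :=
        mul_integral_sq_le_weightedEnergy hA hμ hf.continuous.along_fst hU.along_fst
    _ ≤ exp μ * (weightedEnergy A μ (fun x => f (x, 0))
          (fun x => riemannInvariant a f (x, 0)) * exp (-(2 * γ * t))) := by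
        gcongr
    _ ≤ exp μ * ((2 + 2 * a ^ 2) * exp μ * ((∫ x in (0:ℝ)..1, (f (x, 0) ^ 2
          + partialX f (x, 0) ^ 2)) + ∫ x in (0:ℝ)..1, partialT f (x, 0) ^ 2)
          * exp (-(2 * γ * t))) := by
        gcongr
        exact weightedEnergy_le_mul_integral_sq hA₁ hμ hf.continuous.along_fst
          (hf.partialX (n := 1)).continuous.along_fst (hf.partialT (n := 1)).continuous.along_fst
    _ = _ := by ring

/-- Theorem 1 of the paper, for classical solutions.
Let `a > 0` and `p ∈ ℝ`. For every `γ > 0` there exist `ε > 0` and `M > 0` such that: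
for every continuous `c` with `|c| < ε` on `[0,1] × [0,∞)` and every `C²` function `w`
solving `∂ₜ²w − a²∂ₓ²w + c·w = 0` on `(0,1) × (0,∞)` with boundary conditions
`w(0,t) = p·(wₜ + a wₓ)(0,t)` and `(wₜ + a wₓ)(1,t) = 0` for `t > 0`, one has, for all `t > 0`,
`‖w(·,t)‖_{L²} ≤ M e^{−γt} max(‖w(·,0)‖_{H¹}, ‖wₜ(·,0)‖_{L²})`. -/
theorem perturbed_wave_L2_exponential_stability
    (a p : ℝ) (ha : 0 < a) :
    ∀ γ > (0:ℝ), ∃ ε > (0:ℝ), ∃ M > (0:ℝ),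
      ∀ c : ℝ → ℝ → ℝ,
        Continuous (fun q : ℝ × ℝ => c q.1 q.2) →
        (∀ x ∈ Set.Icc (0:ℝ) 1, ∀ t ≥ (0:ℝ), |c x t| < ε) →
      ∀ w : ℝ → ℝ → ℝ,
        ContDiff ℝ 2 (fun q : ℝ × ℝ => w q.1 q.2) →
        -- the perturbed wave equation ∂ₜ²w − a²∂ₓ²w + c·w = 0 on (0,1)×(0,∞)
        (∀ x ∈ Set.Ioo (0:ℝ) 1, ∀ t > (0:ℝ),
          deriv (deriv (w x)) t
            - a ^ 2 * deriv (fun y => deriv (fun z => w z t) y) x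
            + c x t * w x t = 0) →
        -- boundary condition at x = 0 : w(0,t) = p (wₜ + a wₓ)(0,t)
        (∀ t > (0:ℝ),
          w 0 t = p * (deriv (w 0) t + a * deriv (fun y => w y t) 0)) →
        -- boundary condition at x = 1 : (wₜ + a wₓ)(1,t) = 0
        (∀ t > (0:ℝ),
          deriv (w 1) t + a * deriv (fun y => w y t) 1 = 0) →
      ∀ t > (0:ℝ),
        Real.sqrt (∫ x in (0:ℝ)..1, (w x t) ^ 2) ≤
          M * Real.exp (-γ * t) *
            max (Real.sqrt (∫ x in (0:ℝ)..1,
                  ((w x 0) ^ 2 + (deriv (fun y => w y 0) x) ^ 2)))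
                (Real.sqrt (∫ x in (0:ℝ)..1, (deriv (w x) 0) ^ 2)) := by
  intro γ hγ
  set μ := 4 * γ / a
  set A := min (1 / (p ^ 2 + 1)) (γ ^ 2)
  have hA : 0 < A := lt_min (by positivity) (by positivity)
  have hAp : A * (p ^ 2 + 1) ≤ 1 := (le_div_iff₀ (by positivity)).1 (min_le_left _ _)
  have hA₁ : A ≤ 1 := by nlinarith
  refine ⟨γ * A * exp (-(2 * μ)), by positivity,
    √(2 * (exp μ * ((2 + 2 * a ^ 2) * exp μ)) / A), by positivity, ?_⟩
  intro c hc hcε w hw heq hb₀ hb₁ t ht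
  have hW : ContDiff ℝ 2 (uncurry w) := hw
  have hW₁ := hW.differentiable two_ne_zero
  have hdecay := weightedEnergy_riemannInvariant_le_mul_exp (p := p) hW hc ha.le hγ
    (by positivity) (mul_div_cancel₀ _ ha.ne').ge hA.le hA₁ (min_le_right _ _) (by nlinarith)
    (by rw [mul_assoc, ← exp_add, neg_add_cancel, exp_zero, mul_one])
    (fun x hx s hs => (hcε x hx s hs.le).le)
    (fun x hx s hs => by
      rw [← deriv_deriv_eq_partialT_partialT hW, ← deriv_deriv_eq_partialX_partialX hW]
      exact heq x hx s hs)
    (fun s hs => by rw [riemannInvariant_uncurry hW₁]; exact hb₀ s hs)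
    (fun s hs => by rw [riemannInvariant_uncurry hW₁]; exact hb₁ s hs)
    ht.le
  simp only [deriv_eq_partialT hW₁, deriv_eq_partialX hW₁]
  exact sqrt_le_mul_exp_mul_max hA (by positivity)
    (intervalIntegral.integral_nonneg zero_le_one fun x _ => by positivity)
    (intervalIntegral.integral_nonneg zero_le_one fun x _ => by positivity)
    (mul_integral_sq_le_of_weightedEnergy_le hW (by positivity) hA.le hA₁ hdecay)
end

section
/- Let a > 0 and let w : [0,1]×[0,∞) → ℝ be twice continuously differentiable, satisfying the wave equation ∂²_t w − a² ∂²_x w = 0 on (0,1)×(0,∞), together with the boundary conditions w(0,t) = 0 and (∂_t w + a ∂_x w)(1,t) = 0 for all t > 0. Then w(x,t) = 0 for every x ∈ [0,1] and every t > 2/a. -/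
/-!
The Riemann invariant `u = wₜ + a wₓ` satisfies `a uₓ - uₜ = a² wₓₓ - wₜₜ = 0` (by symmetry of the
second derivative), so it is constant along the characteristics `s ↦ (x + a s, t - s)`. These
reach `x = 1`, where `u` vanishes, within time `1/a`; hence `u = 0` for `t > 1/a`. Then
`w` is constant along `s ↦ (x - a s, t - s)`, whose derivative is `-u`, and these reach `x = 0`,
where `w` vanishes, within a further time `1/a`.
-/

open Set

theorem ContinuousLinearMap.apply_prodMk_eq {F : Type*} [NormedAddCommGroup F] [NormedSpace ℝ F]
    (f : ℝ × ℝ →L[ℝ] F) (b c : ℝ) : f (b, c) = b • f (1, 0) + c • f (0, 1) := by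
  rw [← map_smul, ← map_smul, ← map_add]
  simp

theorem eq_of_fderiv_apply_eq_zero_on_segment {E : Type*} [NormedAddCommGroup E]
    [NormedSpace ℝ E] {g : E → ℝ} (hg : Differentiable ℝ g) {p v : E} {L : ℝ} (hL : 0 ≤ L)
    (h : ∀ s ∈ Ioo 0 L, fderiv ℝ g (p + s • v) v = 0) : g (p + L • v) = g p := by
  rcases hL.eq_or_lt with rfl | hL
  · simp
  have hline : ∀ s : ℝ, HasDerivAt (fun s => g (p + s • v)) (fderiv ℝ g (p + s • v) v) s :=
    fun s => (hg _).hasFDerivAt.comp_hasDerivAt s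
      (by simpa using ((hasDerivAt_id s).smul_const v).const_add p)
  obtain ⟨c, hc, hslope⟩ := exists_hasDerivAt_eq_slope _ _ hL
    (fun s _ => (hline s).continuousAt.continuousWithinAt) (fun s _ => hline s)
  rw [h c hc, eq_comm, div_eq_zero_iff, sub_eq_zero, sub_eq_zero] at hslope
  simpa [hL.ne'] using hslope

section SecondDerivative

variable {E F : Type*} [NormedAddCommGroup E] [NormedSpace ℝ E] [NormedAddCommGroup F]
  [NormedSpace ℝ F] {f : E → F}

theorem ContDiff.differentiable_fderiv_two (hf : ContDiff ℝ 2 f) :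
    Differentiable ℝ (fderiv ℝ f) :=
  (hf.fderiv_right (m := 1) (by norm_num)).differentiable (by norm_num)

theorem fderiv_fderiv_apply_right (hf : ContDiff ℝ 2 f) (q v h : E) :
    fderiv ℝ (fun q => fderiv ℝ f q v) q h = fderiv ℝ (fderiv ℝ f) q h v := by
  rw [fderiv_clm_apply (hf.differentiable_fderiv_two q) (differentiableAt_const v)]
  simp

end SecondDerivative

section Partials

variable {F : Type*} [NormedAddCommGroup F] [NormedSpace ℝ F] {g : ℝ × ℝ → F}

theorem deriv_comp_prodMk_right {x t : ℝ} (hg : DifferentiableAt ℝ g (x, t)) :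
    deriv (fun s => g (x, s)) t = fderiv ℝ g (x, t) (0, 1) :=
  (hg.hasFDerivAt.comp_hasDerivAt t ((hasDerivAt_const t x).prodMk (hasDerivAt_id t))).deriv

theorem deriv_comp_prodMk_left {x t : ℝ} (hg : DifferentiableAt ℝ g (x, t)) :
    deriv (fun y => g (y, t)) x = fderiv ℝ g (x, t) (1, 0) :=
  (hg.hasFDerivAt.comp_hasDerivAt x ((hasDerivAt_id x).prodMk (hasDerivAt_const x t))).deriv

theorem deriv_deriv_comp_prodMk_right (hg : ContDiff ℝ 2 g) (x t : ℝ) :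
    deriv (fun s => deriv (fun r => g (x, r)) s) t =
      fderiv ℝ (fderiv ℝ g) (x, t) (0, 1) (0, 1) := by
  have hg₁ : Differentiable ℝ g := hg.differentiable (by norm_num)
  have hfirst : (fun s => deriv (fun r => g (x, r)) s) = fun s => fderiv ℝ g (x, s) (0, 1) :=
    funext fun s => deriv_comp_prodMk_right (hg₁ _)
  rw [hfirst, deriv_comp_prodMk_right (g := fun q => fderiv ℝ g q (0, 1))
    ((hg.differentiable_fderiv_two _).clm_apply (differentiableAt_const _)),
    fderiv_fderiv_apply_right hg]

theorem deriv_deriv_comp_prodMk_left (hg : ContDiff ℝ 2 g) (x t : ℝ) :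
    deriv (fun y => deriv (fun z => g (z, t)) y) x =
      fderiv ℝ (fderiv ℝ g) (x, t) (1, 0) (1, 0) := by
  have hg₁ : Differentiable ℝ g := hg.differentiable (by norm_num)
  have hfirst : (fun y => deriv (fun z => g (z, t)) y) = fun y => fderiv ℝ g (y, t) (1, 0) :=
    funext fun y => deriv_comp_prodMk_left (hg₁ _)
  rw [hfirst, deriv_comp_prodMk_left (g := fun q => fderiv ℝ g q (1, 0))
    ((hg.differentiable_fderiv_two _).clm_apply (differentiableAt_const _)),
    fderiv_fderiv_apply_right hg]

end Partials

-- With `q = (x, t)`, this is `wₜ + a wₓ`.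
noncomputable def waveRiemannInvariant (a : ℝ) (W : ℝ × ℝ → ℝ) : ℝ × ℝ → ℝ :=
  fun q => fderiv ℝ W q (a, 1)

section WaveRiemannInvariant

variable {W : ℝ × ℝ → ℝ}

theorem fderiv_waveRiemannInvariant_characteristic (a : ℝ) (hW : ContDiff ℝ 2 W) {q : ℝ × ℝ}
    (hq : fderiv ℝ (fderiv ℝ W) q (0, 1) (0, 1) = a ^ 2 * fderiv ℝ (fderiv ℝ W) q (1, 0) (1, 0)) :
    fderiv ℝ (waveRiemannInvariant a W) q (a, -1) = 0 := by
  have hsymm := (hW.contDiffAt (x := q)).isSymmSndFDerivAt (by simp) (1, 0) (0, 1)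
  unfold waveRiemannInvariant
  rw [fderiv_fderiv_apply_right hW, ContinuousLinearMap.apply_prodMk_eq _ a (-1),
    add_apply, smul_apply, smul_apply,
    ContinuousLinearMap.apply_prodMk_eq (fderiv ℝ (fderiv ℝ W) q (1, 0)),
    ContinuousLinearMap.apply_prodMk_eq (fderiv ℝ (fderiv ℝ W) q (0, 1))]
  simp only [smul_eq_mul]
  linear_combination a * hsymm - hq

theorem waveRiemannInvariant_eq_zero {a : ℝ} (ha : 0 < a) (hW : ContDiff ℝ 2 W)
    (hpde : ∀ q : ℝ × ℝ, q.1 ∈ Ioo 0 1 → 0 < q.2 →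
      fderiv ℝ (fderiv ℝ W) q (0, 1) (0, 1) = a ^ 2 * fderiv ℝ (fderiv ℝ W) q (1, 0) (1, 0))
    (hbc : ∀ t > 0, waveRiemannInvariant a W (1, t) = 0)
    {x t : ℝ} (hx : x ∈ Icc 0 1) (ht : 1 / a < t) : waveRiemannInvariant a W (x, t) = 0 := by
  obtain ⟨hx₀, hx₁⟩ := hx
  set L := (1 - x) / a with hL
  have hLa : L * a = 1 - x := div_mul_cancel₀ _ ha.ne'
  have hL₀ : 0 ≤ L := div_nonneg (by linarith) ha.le
  have hL₁ : L ≤ 1 / a := by rw [hL]; gcongr; linarith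
  have hend : (x, t) + L • (a, -1) = ((1 : ℝ), t - L) := by
    ext <;> simp <;> linarith
  have hR : Differentiable ℝ (waveRiemannInvariant a W) :=
    hW.differentiable_fderiv_two.clm_apply (differentiable_const _)
  rw [← eq_of_fderiv_apply_eq_zero_on_segment hR hL₀ _, hend, hbc _ (by linarith)]
  rintro s ⟨hs₀, hsL⟩
  apply fderiv_waveRiemannInvariant_characteristic a hW
  have hsa : s * a < L * a := by gcongr
  have hsa₀ : 0 < s * a := by positivity
  refine hpde _ ⟨?_, ?_⟩ ?_ <;> simp <;> linarith

theorem eq_zero_of_waveRiemannInvariant_eq_zero {a : ℝ} (ha : 0 < a) (hW : Differentiable ℝ W)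
    (hR : ∀ x ∈ Icc (0 : ℝ) 1, ∀ t > 1 / a, waveRiemannInvariant a W (x, t) = 0)
    (hbc : ∀ t > 0, W (0, t) = 0)
    {x t : ℝ} (hx : x ∈ Icc 0 1) (ht : 2 / a < t) : W (x, t) = 0 := by
  obtain ⟨hx₀, hx₁⟩ := hx
  set L := x / a with hL
  have hLa : L * a = x := div_mul_cancel₀ _ ha.ne'
  have hL₀ : 0 ≤ L := div_nonneg hx₀ ha.le
  have hL₁ : L ≤ 1 / a := by rw [hL]; gcongr
  have htwo : 2 / a = 1 / a + 1 / a := by ring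
  have hend : (x, t) + L • (-a, -1) = ((0 : ℝ), t - L) := by
    ext <;> simp <;> linarith
  rw [← eq_of_fderiv_apply_eq_zero_on_segment hW hL₀ _, hend, hbc _ (by linarith)]
  rintro s ⟨hs₀, hsL⟩
  have hsa : s * a < L * a := by gcongr
  have hsa₀ : 0 < s * a := by positivity
  have hneg : ((-a, -1) : ℝ × ℝ) = -(a, 1) := by simp
  rw [hneg, map_neg, neg_eq_zero]
  refine hR _ ⟨?_, ?_⟩ _ ?_ <;> simp <;> linarith [one_div a]

end WaveRiemannInvariant

/-- the paper's introductory superstability example.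
Any `C²` solution of the wave equation `∂ₜ²w = a²∂ₓ²w` on `(0,1) × (0,∞)` with
boundary conditions `w(0,t) = 0` and `(wₜ + a wₓ)(1,t) = 0` for `t > 0` vanishes
identically for `t > 2/a`. -/
theorem wave_dirichlet_finite_time_extinction
    (a : ℝ) (ha : 0 < a) (w : ℝ → ℝ → ℝ)
    (hw : ContDiff ℝ 2 (fun q : ℝ × ℝ => w q.1 q.2))
    -- the wave equation ∂ₜ²w − a²∂ₓ²w = 0 on (0,1)×(0,∞)
    (hpde : ∀ x ∈ Set.Ioo (0:ℝ) 1, ∀ t > (0:ℝ),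
      deriv (deriv (w x)) t
        - a ^ 2 * deriv (fun y => deriv (fun z => w z t) y) x = 0)
    -- boundary condition at x = 0 : w(0,t) = 0
    (hbc0 : ∀ t > (0:ℝ), w 0 t = 0)
    -- boundary condition at x = 1 : (wₜ + a wₓ)(1,t) = 0
    (hbc1 : ∀ t > (0:ℝ), deriv (w 1) t + a * deriv (fun y => w y t) 1 = 0) :
    ∀ x ∈ Set.Icc (0:ℝ) 1, ∀ t > 2 / a, w x t = 0 := by
  set W : ℝ × ℝ → ℝ := fun q => w q.1 q.2
  have hW₁ : Differentiable ℝ W := hw.differentiable (by norm_num)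
  have hpdeW : ∀ q : ℝ × ℝ, q.1 ∈ Ioo 0 1 → 0 < q.2 →
      fderiv ℝ (fderiv ℝ W) q (0, 1) (0, 1) = a ^ 2 * fderiv ℝ (fderiv ℝ W) q (1, 0) (1, 0) := by
    rintro ⟨x, t⟩ hx ht
    have h := hpde x hx t ht
    rw [← deriv_deriv_comp_prodMk_right hw, ← deriv_deriv_comp_prodMk_left hw]
    linarith
  have hbcW : ∀ t > 0, waveRiemannInvariant a W (1, t) = 0 := by
    intro t ht
    have h := hbc1 t ht
    rw [waveRiemannInvariant, ContinuousLinearMap.apply_prodMk_eq,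
      ← deriv_comp_prodMk_left (hW₁ _), ← deriv_comp_prodMk_right (hW₁ _)]
    simp only [smul_eq_mul, one_mul]
    linarith
  intro x hx t ht
  exact eq_zero_of_waveRiemannInvariant_eq_zero ha hW₁
    (fun x hx t ht => waveRiemannInvariant_eq_zero ha hw hpdeW hbcW hx ht) hbc0 hx ht
end

section
/- Let a > 0 and p ∈ ℝ, and let w : [0,1]×[0,∞) → ℝ be twice continuously differentiable, satisfying the wave equation ∂²_t w − a² ∂²_x w = 0 on (0,1)×(0,∞), together with the boundary conditions w(0,t) = p·(∂_t w + a ∂_x w)(0,t) and (∂_t w + a ∂_x w)(1,t) = 0 for all t > 0. Then w(x,t) = 0 for every x ∈ [0,1] and every t > 2/a. -/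
/-!
Write `v = wₜ + a wₓ`. By symmetry of the second derivative, `(∂ₜ - a ∂ₓ) v = wₜₜ - a² wₓₓ = 0`,
so `v` is constant along the characteristics `x + a t = const`. Followed backwards in time these
leave the strip through `x = 1`, where `v = 0`, within time `1/a`; hence `v = 0` for `t > 1/a`.
There `w` itself is constant along the characteristics `x - a t = const`, which reach `x = 0`
within a further time `1/a`, at a point where `w = p v = 0`.
-/

open Set Function

section SecondDerivatives

variable {F : Type*} [NormedAddCommGroup F] [NormedSpace ℝ F]

theorem HasFDerivAt.apply_const {E G : Type*} [NormedAddCommGroup E] [NormedSpace ℝ E]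
    [NormedAddCommGroup G] [NormedSpace ℝ G] {c : E → G →L[ℝ] F} {c' : E →L[ℝ] G →L[ℝ] F}
    {p : E} (hc : HasFDerivAt c c' p) (u : G) :
    HasFDerivAt (fun q => c q u) (c'.flip u) p := by
  simpa using hc.clm_apply (hasFDerivAt_const u p)

theorem ContinuousLinearMap.apply_sub_apply_add_of_symm (B : ℝ × ℝ →L[ℝ] ℝ × ℝ →L[ℝ] F)
    (hB : B (1, 0) (0, 1) = B (0, 1) (1, 0)) (a : ℝ) :
    B (a, -1) (a, 1) = a ^ 2 • B (1, 0) (1, 0) - B (0, 1) (0, 1) := by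
  have hd : ((a, -1) : ℝ × ℝ) = a • (1, 0) - (0, 1) := by simp
  have hu : ((a, 1) : ℝ × ℝ) = a • (1, 0) + (0, 1) := by simp
  rw [hd, hu]
  simp only [map_add, map_sub, map_smul, sub_apply, smul_apply, hB]
  module

variable {w : ℝ → ℝ → F} {L : ℝ × ℝ →L[ℝ] F} {x t : ℝ}

theorem HasFDerivAt.hasDerivAt_uncurry_fst (h : HasFDerivAt (uncurry w) L (x, t)) :
    HasDerivAt (fun y => w y t) (L (1, 0)) x :=
  (h.comp_hasDerivAt x ((hasDerivAt_id x).prodMk (hasDerivAt_const x t)) :)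

theorem HasFDerivAt.hasDerivAt_uncurry_snd (h : HasFDerivAt (uncurry w) L (x, t)) :
    HasDerivAt (w x) (L (0, 1)) t :=
  (h.comp_hasDerivAt t ((hasDerivAt_const t x).prodMk (hasDerivAt_id t)) :)

theorem ContDiff.deriv_deriv_uncurry_fst (hw : ContDiff ℝ 2 (uncurry w)) :
    deriv (fun y => deriv (fun z => w z t) y) x =
      fderiv ℝ (fderiv ℝ (uncurry w)) (x, t) (1, 0) (1, 0) := by
  have hW : Differentiable ℝ (uncurry w) := hw.differentiable two_ne_zero
  have hDW : Differentiable ℝ (fderiv ℝ (uncurry w)) :=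
    (hw.fderiv_right one_add_one_eq_two.le).differentiable one_ne_zero
  have hfirst :
      (fun y => deriv (fun z => w z t) y) = fun y => fderiv ℝ (uncurry w) (y, t) (1, 0) :=
    funext fun y => (hW (y, t)).hasFDerivAt.hasDerivAt_uncurry_fst.deriv
  rw [hfirst]
  exact (HasFDerivAt.hasDerivAt_uncurry_fst (w := fun y s => fderiv ℝ (uncurry w) (y, s) (1, 0))
    ((hDW (x, t)).hasFDerivAt.apply_const (1, 0))).deriv

theorem ContDiff.deriv_deriv_uncurry_snd (hw : ContDiff ℝ 2 (uncurry w)) :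
    deriv (deriv (w x)) t = fderiv ℝ (fderiv ℝ (uncurry w)) (x, t) (0, 1) (0, 1) := by
  have hW : Differentiable ℝ (uncurry w) := hw.differentiable two_ne_zero
  have hDW : Differentiable ℝ (fderiv ℝ (uncurry w)) :=
    (hw.fderiv_right one_add_one_eq_two.le).differentiable one_ne_zero
  have hfirst : deriv (w x) = fun s => fderiv ℝ (uncurry w) (x, s) (0, 1) :=
    funext fun s => (hW (x, s)).hasFDerivAt.hasDerivAt_uncurry_snd.deriv
  rw [hfirst]
  exact (HasFDerivAt.hasDerivAt_uncurry_snd (w := fun y s => fderiv ℝ (uncurry w) (y, s) (0, 1))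
    ((hDW (x, t)).hasFDerivAt.apply_const (0, 1))).deriv

theorem DifferentiableAt.deriv_add_smul_deriv_uncurry (h : DifferentiableAt ℝ (uncurry w) (x, t))
    (a : ℝ) :
    deriv (w x) t + a • deriv (fun y => w y t) x = fderiv ℝ (uncurry w) (x, t) (a, 1) := by
  have hu : ((a, 1) : ℝ × ℝ) = a • (1, 0) + (0, 1) := by simp
  rw [h.hasFDerivAt.hasDerivAt_uncurry_snd.deriv, h.hasFDerivAt.hasDerivAt_uncurry_fst.deriv, hu,
    map_add, map_smul, add_comm]

theorem ContDiff.fderiv_fderiv_apply_characteristic (hw : ContDiff ℝ 2 (uncurry w)) (a : ℝ) :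
    fderiv ℝ (fun q => fderiv ℝ (uncurry w) q (a, 1)) (x, t) (a, -1) =
      a ^ 2 • deriv (fun y => deriv (fun z => w z t) y) x - deriv (deriv (w x)) t := by
  have hsymm : IsSymmSndFDerivAt ℝ (uncurry w) (x, t) := hw.contDiffAt.isSymmSndFDerivAt (by simp)
  have hDW : Differentiable ℝ (fderiv ℝ (uncurry w)) :=
    (hw.fderiv_right one_add_one_eq_two.le).differentiable one_ne_zero
  rw [hw.deriv_deriv_uncurry_fst, hw.deriv_deriv_uncurry_snd,
    ← ContinuousLinearMap.apply_sub_apply_add_of_symm _ (hsymm _ _),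
    ((hDW (x, t)).hasFDerivAt.apply_const (a, 1)).fderiv, ContinuousLinearMap.flip_apply]

end SecondDerivatives

theorem eq_of_fderiv_apply_eq_zero {E : Type*} [NormedAddCommGroup E] [NormedSpace ℝ E]
    {f : E → ℝ} (hf : Differentiable ℝ f) {q d : E} {T : ℝ} (hT : 0 ≤ T)
    (h : ∀ s ∈ Ioo 0 T, fderiv ℝ f (q + s • d) d = 0) : f (q + T • d) = f q := by
  rcases hT.eq_or_lt with rfl | hT
  · simp
  have hline : ∀ s : ℝ, HasDerivAt (fun s => f (q + s • d)) (fderiv ℝ f (q + s • d) d) s :=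
    fun s => (hf _).hasFDerivAt.comp_hasDerivAt s
      (by simpa using ((hasDerivAt_id s).smul_const d).const_add q)
  obtain ⟨c, hc, hslope⟩ := exists_hasDerivAt_eq_slope _ _ hT
    (fun s _ => (hline s).continuousAt.continuousWithinAt) fun s _ => hline s
  rw [h c hc, eq_comm, div_eq_zero_iff, sub_eq_zero, zero_smul, add_zero] at hslope
  exact hslope.resolve_right (by linarith)

theorem eq_zero_of_transport_from_right {v : ℝ × ℝ → ℝ} (hv : Differentiable ℝ v) {a T : ℝ}
    (ha : 0 < a) (hchar : ∀ x ∈ Ioo 0 1, ∀ t > T, fderiv ℝ v (x, t) (a, -1) = 0)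
    (hright : ∀ t > T, v (1, t) = 0) {x t : ℝ} (hx : x ∈ Icc 0 1) (ht : T + 1 / a < t) :
    v (x, t) = 0 := by
  have hT : 0 ≤ (1 - x) / a := div_nonneg (by linarith [hx.2]) ha.le
  have hTa : (1 - x) / a ≤ 1 / a := by gcongr; linarith [hx.1]
  have hend : (x, t) + ((1 - x) / a) • ((a, -1) : ℝ × ℝ) = (1, t - (1 - x) / a) := by
    ext <;> simp [field]; ring
  rw [← eq_of_fderiv_apply_eq_zero hv hT fun s hs => ?_, hend]
  · exact hright _ (by linarith)
  have hs' : s * a < 1 - x := by rw [← lt_div_iff₀ ha]; exact hs.2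
  have hpt : (x, t) + s • ((a, -1) : ℝ × ℝ) = (x + s * a, t - s) := by
    ext <;> simp [sub_eq_add_neg]
  rw [hpt]
  exact hchar _ ⟨by nlinarith [hx.1, hs.1], by linarith⟩ _ (by linarith [hs.2])

theorem eq_zero_of_transport_from_left {u : ℝ × ℝ → ℝ} (hu : Differentiable ℝ u) {a T : ℝ}
    (ha : 0 < a) (hchar : ∀ x ∈ Ioo 0 1, ∀ t > T, fderiv ℝ u (x, t) (a, 1) = 0)
    (hleft : ∀ t > T, u (0, t) = 0) {x t : ℝ} (hx : x ∈ Icc 0 1) (ht : T + 1 / a < t) :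
    u (x, t) = 0 := by
  have hT : 0 ≤ x / a := div_nonneg hx.1 ha.le
  have hTa : x / a ≤ 1 / a := by gcongr; exact hx.2
  have hend : (x, t) + (x / a) • ((-a, -1) : ℝ × ℝ) = (0, t - x / a) := by
    ext <;> simp [field]; ring
  rw [← eq_of_fderiv_apply_eq_zero hu hT fun s hs => ?_, hend]
  · exact hleft _ (by linarith)
  have hs' : s * a < x := by rw [← lt_div_iff₀ ha]; exact hs.2
  have hpt : (x, t) + s • ((-a, -1) : ℝ × ℝ) = (x - s * a, t - s) := by
    ext <;> simp [sub_eq_add_neg]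
  have hdir : ((-a, -1) : ℝ × ℝ) = -(a, 1) := by simp
  rw [hpt, hdir, map_neg, hchar _ ⟨by linarith, by nlinarith [hx.2, hs.1]⟩ _ (by linarith [hs.2]),
    neg_zero]

/-- finite time extinction for the unperturbed problem (1),(4),(3).
Any `C²` solution of the wave equation `∂ₜ²w = a²∂ₓ²w` on `(0,1) × (0,∞)` with
boundary conditions `w(0,t) = p·(wₜ + a wₓ)(0,t)` and `(wₜ + a wₓ)(1,t) = 0` for
`t > 0` vanishes identically for `t > 2/a`, for any constant `p`. -/
theorem wave_p_boundary_finite_time_extinction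
    (a p : ℝ) (ha : 0 < a) (w : ℝ → ℝ → ℝ)
    (hw : ContDiff ℝ 2 (fun q : ℝ × ℝ => w q.1 q.2))
    -- the wave equation ∂ₜ²w − a²∂ₓ²w = 0 on (0,1)×(0,∞)
    (hpde : ∀ x ∈ Set.Ioo (0:ℝ) 1, ∀ t > (0:ℝ),
      deriv (deriv (w x)) t
        - a ^ 2 * deriv (fun y => deriv (fun z => w z t) y) x = 0)
    -- boundary condition at x = 0 : w(0,t) = p (wₜ + a wₓ)(0,t)
    (hbc0 : ∀ t > (0:ℝ),
      w 0 t = p * (deriv (w 0) t + a * deriv (fun y => w y t) 0))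
    -- boundary condition at x = 1 : (wₜ + a wₓ)(1,t) = 0
    (hbc1 : ∀ t > (0:ℝ), deriv (w 1) t + a * deriv (fun y => w y t) 1 = 0) :
    ∀ x ∈ Set.Icc (0:ℝ) 1, ∀ t > 2 / a, w x t = 0 := by
  change ContDiff ℝ 2 (uncurry w) at hw
  have hW : Differentiable ℝ (uncurry w) := hw.differentiable two_ne_zero
  have hv : Differentiable ℝ fun q => fderiv ℝ (uncurry w) q (a, 1) :=
    ((hw.fderiv_right one_add_one_eq_two.le).differentiable one_ne_zero).clm_apply
      (differentiable_const _)
  have hv_char : ∀ x ∈ Ioo 0 1, ∀ t > 0,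
      fderiv ℝ (fun q => fderiv ℝ (uncurry w) q (a, 1)) (x, t) (a, -1) = 0 := fun x hx t ht => by
    rw [hw.fderiv_fderiv_apply_characteristic, smul_eq_mul]
    linarith [hpde x hx t ht]
  have hv_right : ∀ t > 0, fderiv ℝ (uncurry w) (1, t) (a, 1) = 0 := fun t ht => by
    rw [← (hW _).deriv_add_smul_deriv_uncurry, smul_eq_mul, hbc1 t ht]
  have hv_zero : ∀ x ∈ Icc 0 1, ∀ t > 1 / a, fderiv ℝ (uncurry w) (x, t) (a, 1) = 0 :=
    fun x hx t ht => eq_zero_of_transport_from_right hv ha hv_char hv_right hx (by simpa using ht)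
  have hw_left : ∀ t > 1 / a, w 0 t = 0 := fun t ht => by
    rw [hbc0 t (lt_trans (by positivity) ht), ← smul_eq_mul a, (hW _).deriv_add_smul_deriv_uncurry,
      hv_zero 0 (left_mem_Icc.2 zero_le_one) t ht, mul_zero]
  intro x hx t ht
  refine eq_zero_of_transport_from_left (u := uncurry w) hW ha
    (fun y hy s hs => hv_zero y (Ioo_subset_Icc_self hy) s hs) hw_left hx ?_
  linarith [show 2 / a = 1 / a + 1 / a by ring]
end

section
/- Let a > 0, p ∈ ℝ, let c : [0,1]×[0,∞) → ℝ be continuous, and let w, u : [0,1]×[0,∞) → ℝ be continuously differentiable functions satisfying ∂_t w + a ∂_x w = u and ∂_t u − a ∂_x u + c·w = 0 on (0,1)×(0,∞), together with the boundary conditions w(0,t) = p·u(0,t) and u(1,t) = 0 for all t > 0. Then for every x ∈ [0,1] and every t > 4/a one has w(x,t) = −∫_{t−x/a}^{t} ∫_{2τ−t+(x−1)/a}^{τ} c(x + a(2τ−t−ξ), ξ) · w(x + a(2τ−t−ξ), ξ) dξ dτ − p ∫_{t−(x+1)/a}^{t−x/a} c(a(t−τ)−x, τ) · w(a(t−τ)−x,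 τ) dτ. -/
/-!
Along a characteristic `s ↦ (x - v (t - s), s)` the transport operator `∂ₜ + v ∂ₓ` becomes an
ordinary derivative, so the fundamental theorem of calculus expresses a solution at `(x, t)`
through its value at the foot of the characteristic plus the integral of the source. For `w`
(speed `a`) the foot lies on `x = 0`, where `w = p u`; for `u` (speed `-a`, source `-c w`) it lies
on `x = 1`, where `u = 0`. Substituting the representation of `u` both into the boundary term and
into the source of `w` gives the equation.
-/

open Set intervalIntegral

section Characteristics

variable {F f : ℝ → ℝ → ℝ} {v x t t₀ : ℝ}

theorem hasDerivAt_along_characteristic {s : ℝ}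
    (hF : DifferentiableAt ℝ (fun q : ℝ × ℝ => F q.1 q.2) (x - v * (t - s), s)) :
    HasDerivAt (fun r => F (x - v * (t - r)) r)
      (deriv (F (x - v * (t - s))) s + v * deriv (fun y => F y s) (x - v * (t - s))) s := by
  set X := x - v * (t - s)
  set L := fderiv ℝ (fun q : ℝ × ℝ => F q.1 q.2) (X, s)
  have hL : HasFDerivAt (fun q : ℝ × ℝ => F q.1 q.2) L (X, s) := hF.hasFDerivAt
  have hcurve : HasDerivAt (fun r : ℝ => (x - v * (t - r), r)) (v, 1) s := by
    have := (((hasDerivAt_id s).const_sub t).const_mul v).const_sub x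
    exact (by simpa using this : HasDerivAt (fun r => x - v * (t - r)) v s).prodMk
      (hasDerivAt_id s)
  have hdt : HasDerivAt (F X) (L (0, 1)) s :=
    hL.comp_hasDerivAt (x := s) (f := fun r => (X, r))
      ((hasDerivAt_const _ _).prodMk (hasDerivAt_id s))
  have hdx : HasDerivAt (fun y => F y s) (L (1, 0)) X :=
    hL.comp_hasDerivAt (x := X) (f := fun y => (y, s))
      ((hasDerivAt_id X).prodMk (hasDerivAt_const _ _))
  have hsplit : L (v, 1) = L (0, 1) + v * L (1, 0) := by
    rw [show ((v, 1) : ℝ × ℝ) = (0, 1) + v • (1, 0) by simp, map_add, map_smul, smul_eq_mul]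
  rw [hdt.deriv, hdx.deriv, ← hsplit]
  exact hL.comp_hasDerivAt (f := fun r => (x - v * (t - r), r)) s hcurve

theorem eq_add_integral_along_characteristic
    (hF : Differentiable ℝ (fun q : ℝ × ℝ => F q.1 q.2))
    (hf : Continuous (fun q : ℝ × ℝ => f q.1 q.2)) (ht : t₀ ≤ t)
    (htransport : ∀ s ∈ Ioo t₀ t, deriv (F (x - v * (t - s))) s
      + v * deriv (fun y => F y s) (x - v * (t - s)) = f (x - v * (t - s)) s) :
    F x t = F (x - v * (t - t₀)) t₀ + ∫ s in t₀..t, f (x - v * (t - s)) s := by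
  have hcurve : Continuous (fun r : ℝ => ((x - v * (t - r), r) : ℝ × ℝ)) := by fun_prop
  have hftc := integral_eq_sub_of_hasDerivAt_of_le (f := fun r => F (x - v * (t - r)) r)
    (f' := fun r => f (x - v * (t - r)) r) ht (hF.continuous.comp hcurve).continuousOn
    (fun s hs => htransport s hs ▸ hasDerivAt_along_characteristic (hF _))
    ((hf.comp hcurve).intervalIntegrable _ _)
  simp only [sub_self, mul_zero, sub_zero] at hftc
  linarith

end Characteristics

section BoundaryValueTransport

variable {F f : ℝ → ℝ → ℝ} {a x t t₀ : ℝ}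

theorem eq_boundary_add_integral_of_transport_right (ha : 0 < a)
    (hF : Differentiable ℝ (fun q : ℝ × ℝ => F q.1 q.2))
    (hf : Continuous (fun q : ℝ × ℝ => f q.1 q.2))
    (htransport : ∀ x ∈ Ioo (0:ℝ) 1, ∀ t > (0:ℝ),
      deriv (F x) t + a * deriv (fun y => F y t) x = f x t)
    (hx : x ∈ Icc (0:ℝ) 1) (ht : 0 ≤ t - x / a) :
    F x t = F 0 (t - x / a) + ∫ s in (t - x / a)..t, f (x - a * (t - s)) s := by
  have hfoot : x - a * (t - (t - x / a)) = 0 := by field_simp; ring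
  have hseg : ∀ s ∈ Ioo (t - x / a) t, x - a * (t - s) ∈ Ioo (0:ℝ) 1 := by
    rintro s ⟨hs₀, hs⟩
    have : a * (t - s) < x := by rw [← lt_div_iff₀' ha]; linarith
    constructor <;> nlinarith [hx.2]
  rw [← hfoot]
  refine eq_add_integral_along_characteristic hF hf (by linarith [div_nonneg hx.1 ha.le])
    fun s hs => htransport _ (hseg s hs) s (by linarith [hs.1])

theorem eq_integral_of_transport_left_of_right_boundary_eq_zero (ha : 0 < a)
    (hF : Differentiable ℝ (fun q : ℝ × ℝ => F q.1 q.2))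
    (hf : Continuous (fun q : ℝ × ℝ => f q.1 q.2))
    (htransport : ∀ x ∈ Ioo (0:ℝ) 1, ∀ t > (0:ℝ),
      deriv (F x) t - a * deriv (fun y => F y t) x = f x t)
    (hbc : ∀ t > (0:ℝ), F 1 t = 0)
    (hx : 0 ≤ x) (ht₀ : 0 < t₀) (ht : t₀ ≤ t) (hfoot : x + a * (t - t₀) = 1) :
    F x t = ∫ s in t₀..t, f (x + a * (t - s)) s := by
  have hline : ∀ s, x - -a * (t - s) = x + a * (t - s) := fun s => by ring
  have hseg : ∀ s ∈ Ioo t₀ t, x + a * (t - s) ∈ Ioo (0:ℝ) 1 := by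
    rintro s ⟨hs₀, hs⟩
    constructor <;> nlinarith
  have h := eq_add_integral_along_characteristic (v := -a) hF hf ht fun s hs => by
    have := htransport _ (hseg s hs) s (by linarith [hs.1])
    rw [hline]
    linarith
  simpa only [hline, hfoot, hbc t₀ ht₀, zero_add] using h

end BoundaryValueTransport

/-- the closed integral equation for `w` from the proof of Theorem 1.
If `(w,u)` is a `C¹` solution of the first-order system with boundary conditions
`w(0,t) = p·u(0,t)` and `u(1,t) = 0`, then for `x ∈ [0,1]` and `t > 4/a`,
`w(x,t) = −∫_{t−x/a}^{t} ∫_{2τ−t+(x−1)/a}^{τ} (c·w)(x+a(2τ−t−ξ), ξ) dξ dτ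
          − p ∫_{t−(x+1)/a}^{t−x/a} (c·w)(a(t−τ)−x, τ) dτ`. -/
theorem closed_integral_equation_for_w
    (a p : ℝ) (ha : 0 < a)
    (c : ℝ → ℝ → ℝ) (hc : Continuous (fun q : ℝ × ℝ => c q.1 q.2))
    (w u : ℝ → ℝ → ℝ)
    (hw : ContDiff ℝ 1 (fun q : ℝ × ℝ => w q.1 q.2))
    (hu : ContDiff ℝ 1 (fun q : ℝ × ℝ => u q.1 q.2))
    -- ∂ₜw + a∂ₓw = u on (0,1)×(0,∞)
    (heq1 : ∀ x ∈ Set.Ioo (0:ℝ) 1, ∀ t > (0:ℝ),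
      deriv (w x) t + a * deriv (fun y => w y t) x = u x t)
    -- ∂ₜu − a∂ₓu + c·w = 0 on (0,1)×(0,∞)
    (heq2 : ∀ x ∈ Set.Ioo (0:ℝ) 1, ∀ t > (0:ℝ),
      deriv (u x) t - a * deriv (fun y => u y t) x + c x t * w x t = 0)
    -- boundary conditions
    (hbc0 : ∀ t > (0:ℝ), w 0 t = p * u 0 t)
    (hbc1 : ∀ t > (0:ℝ), u 1 t = 0) :
    ∀ x ∈ Set.Icc (0:ℝ) 1, ∀ t > 4 / a,
      w x t =
        -(∫ τ in (t - x / a)..t, ∫ ξ in (2 * τ - t + (x - 1) / a)..τ,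
            c (x + a * (2 * τ - t - ξ)) ξ * w (x + a * (2 * τ - t - ξ)) ξ)
        - p * ∫ τ in (t - (x + 1) / a)..(t - x / a),
            c (a * (t - τ) - x) τ * w (a * (t - τ) - x) τ := by
  intro x hx t ht
  have hxa : x / a ≤ 1 / a := by gcongr; exact hx.2
  have hxa₀ : 0 ≤ x / a := div_nonneg hx.1 ha.le
  have ht' : 4 * (1 / a) < t := by rwa [mul_one_div]
  have hu_char : ∀ x' t' t₀, 0 ≤ x' → 0 < t₀ → t₀ ≤ t' → x' + a * (t' - t₀) = 1 →
      u x' t' = -∫ s in t₀..t', c (x' + a * (t' - s)) s * w (x' + a * (t' - s)) s :=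
    fun x' t' t₀ hx' ht₀ hle hfoot => by
      rw [← integral_neg]
      exact eq_integral_of_transport_left_of_right_boundary_eq_zero
        (f := fun x t => -(c x t * w x t)) ha (hu.differentiable one_ne_zero) (by fun_prop)
        (fun y hy s hs => by linarith [heq2 y hy s hs]) hbc1 hx' ht₀ hle hfoot
  have hboundary : w 0 (t - x / a) = -(p * ∫ τ in (t - (x + 1) / a)..(t - x / a),
      c (a * (t - τ) - x) τ * w (a * (t - τ) - x) τ) := by
    have hline : ∀ τ, 0 + a * (t - x / a - τ) = a * (t - τ) - x := fun τ => by
      field_simp; ring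
    rw [hbc0 _ (by linarith), hu_char 0 (t - x / a) (t - (x + 1) / a) le_rfl
      (by rw [add_div]; linarith) (by rw [add_div]; linarith) (by field_simp; ring)]
    simp only [hline, mul_neg]
  have hinner : ∫ τ in (t - x / a)..t, u (x - a * (t - τ)) τ
      = -∫ τ in (t - x / a)..t, ∫ ξ in (2 * τ - t + (x - 1) / a)..τ,
          c (x + a * (2 * τ - t - ξ)) ξ * w (x + a * (2 * τ - t - ξ)) ξ := by
    rw [← integral_neg]
    refine integral_congr fun τ hτ => ?_
    rw [uIcc_of_le (by linarith)] at hτ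
    have hline : ∀ ξ, x - a * (t - τ) + a * (τ - ξ) = x + a * (2 * τ - t - ξ) := fun ξ => by
      ring
    have hfoot_le : 2 * τ - t + (x - 1) / a ≤ τ := by rw [sub_div]; linarith [hτ.2]
    have hx' : a * (t - τ) ≤ x := by rw [← le_div_iff₀' ha]; linarith [hτ.1]
    simp only [hu_char (x - a * (t - τ)) τ (2 * τ - t + (x - 1) / a) (by linarith)
      (by rw [sub_div]; linarith [hτ.1]) hfoot_le (by field_simp; ring), hline]
  rw [eq_boundary_add_integral_of_transport_right ha (hw.differentiable one_ne_zero) hu.continuous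
    heq1 hx (by linarith), hboundary, hinner]
  ring
end

section
/- Let a > 0 and p ∈ ℝ. There exists a constant K > 0, depending only on a and p, such that the following holds: for every bounded continuous function c : [0,1]×[0,∞) → ℝ and every pair of continuously differentiable functions w, u : [0,1]×[0,∞) → ℝ satisfying ∂_t w + a ∂_x w = u and ∂_t u − a ∂_x u + c·w = 0 on (0,1)×(0,∞), together with the boundary conditions w(0,t) = p·u(0,t) and u(1,t) = 0 for all t > 0, the function W(t) := (∫_0^1 w(x,t)² dx)^{1/2} satisfies W(t) ≤ K · (sup_{(x,s)} |c(x,s)|) · ∫_{t−4/a}^{t} W(τ) dτ for every t > 4/a. -/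
/-!
Along the characteristics both equations integrate explicitly: for `t > 1/a`,
`u(z,t) = -∫₀^{(1-z)/a} (c w)(z + a s, t - s) ds` and
`w(1-z,t) = p u(0, t - (1-z)/a) + ∫₀^{(1-z)/a} u(1 - z - a s, t - s) ds`.
Minkowski's integral inequality turns these into `‖u(t)‖ ≤ Cb ∫_{t-1/a}^t W` and
`W(t) ≤ |p| (a ∫_{t-1/a}^t u(0,θ)² dθ)^{1/2} + ∫_{t-1/a}^t ‖u(θ)‖ dθ`, while the energy identity
`d/dt ‖u(t)‖² = -a u(0,t)² - 2 ∫ c u w` bounds the boundary trace by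
`‖u(t-1/a)‖² + 2 Cb ∫_{t-1/a}^t ‖u‖ W`. On the window `[t - 1/a, t]` every `‖u(θ)‖` is at most
`M = Cb ∫_{t-4/a}^t W`, so the trace term is at most `3 M²` and `W(t) ≤ (√3 |p| + 1/a) M`.
-/

open Set intervalIntegral

theorem integral_mul_le_sqrt_mul_sqrt {α β : ℝ} (hαβ : α ≤ β) {f g : ℝ → ℝ}
    (hf : Continuous f) (hg : Continuous g) :
    ∫ x in α..β, f x * g x ≤ √(∫ x in α..β, f x ^ 2) * √(∫ x in α..β, g x ^ 2) := by
  set A := ∫ x in α..β, f x ^ 2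
  set B := ∫ x in α..β, f x * g x
  set C := ∫ x in α..β, g x ^ 2
  have hA : 0 ≤ A := integral_nonneg hαβ fun _ _ => sq_nonneg _
  have hquad : ∀ r : ℝ, 0 ≤ C * (r * r) + 2 * B * r + A := fun r => by
    have hexpand : ∫ x in α..β, (f x + r * g x) ^ 2 = C * (r * r) + 2 * B * r + A := by
      calc ∫ x in α..β, (f x + r * g x) ^ 2
          = ∫ x in α..β, (g x ^ 2 * (r * r) + f x * g x * (2 * r) + f x ^ 2) :=
            integral_congr fun x _ => by ring
        _ = C * (r * r) + 2 * B * r + A := by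
            rw [integral_add, integral_add, integral_mul_const, integral_mul_const]
            · ring
            all_goals exact Continuous.intervalIntegrable (by fun_prop) _ _
    exact hexpand ▸ integral_nonneg hαβ fun _ _ => sq_nonneg _
  have hBAC : B ^ 2 ≤ A * C := by
    have := discrim_le_zero hquad
    rw [discrim] at this
    linarith
  calc B ≤ |B| := le_abs_self B
    _ ≤ √(A * C) := Real.abs_le_sqrt hBAC
    _ = √A * √C := Real.sqrt_mul hA C

theorem Continuous.integrableOn_Ioc_prod_Ioc {F : ℝ × ℝ → ℝ} (hF : Continuous F)
    (α β γ δ : ℝ) : MeasureTheory.IntegrableOn F (Ioc α β ×ˢ Ioc γ δ) :=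
  (hF.continuousOn.integrableOn_compact (isCompact_Icc.prod isCompact_Icc)).mono_set
    (prod_mono Ioc_subset_Icc_self Ioc_subset_Icc_self)

theorem intervalIntegral_integral_swap {α β γ δ : ℝ} (hαβ : α ≤ β) (hγδ : γ ≤ δ)
    {F : ℝ → ℝ → ℝ}
    (hF : MeasureTheory.IntegrableOn (Function.uncurry F) (Ioc α β ×ˢ Ioc γ δ)) :
    ∫ x in α..β, ∫ y in γ..δ, F x y = ∫ y in γ..δ, ∫ x in α..β, F x y := by
  simp only [integral_of_le hαβ, integral_of_le hγδ]
  refine MeasureTheory.integral_integral_swap ?_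
  rwa [MeasureTheory.Measure.prod_restrict, ← MeasureTheory.Measure.volume_eq_prod]

theorem intervalIntegral_indicator_Iic {α β c : ℝ} (hαc : α ≤ c) (hcβ : c ≤ β) (f : ℝ → ℝ) :
    ∫ x in α..β, (Iic c).indicator f x = ∫ x in α..c, f x := by
  rw [integral_of_le (hαc.trans hcβ), integral_of_le hαc,
    MeasureTheory.setIntegral_indicator measurableSet_Iic, Ioc_inter_Iic, min_eq_right hcβ]

theorem integral_integral_swap_triangle {a : ℝ} (ha : 0 < a) {F : ℝ → ℝ → ℝ}
    (hF : Continuous fun q : ℝ × ℝ => F q.1 q.2) :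
    ∫ z in (0:ℝ)..1, ∫ s in (0:ℝ)..(1 - z) / a, F z s
      = ∫ s in (0:ℝ)..1 / a, ∫ z in (0:ℝ)..1 - a * s, F z s := by
  set T : Set (ℝ × ℝ) := {q | q.1 + a * q.2 ≤ 1}
  have hT : MeasurableSet T := measurableSet_le (by fun_prop) measurable_const
  have hslice_fst : ∀ z, (fun s => T.indicator (fun q => F q.1 q.2) (z, s))
      = (Iic ((1 - z) / a)).indicator (F z) := fun z => by
    ext s
    simp only [T, indicator_apply, mem_ofPred_eq, mem_Iic, le_div_iff₀ ha]
    congr 1; exact propext ⟨fun h => by linarith, fun h => by linarith⟩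
  have hslice_snd : ∀ s, (fun z => T.indicator (fun q => F q.1 q.2) (z, s))
      = (Iic (1 - a * s)).indicator (fun z => F z s) := fun s => by
    ext z
    simp only [T, indicator_apply, mem_ofPred_eq, mem_Iic]
    congr 1; exact propext ⟨fun h => by linarith, fun h => by linarith⟩
  calc ∫ z in (0:ℝ)..1, ∫ s in (0:ℝ)..(1 - z) / a, F z s
      = ∫ z in (0:ℝ)..1, ∫ s in (0:ℝ)..1 / a, T.indicator (fun q => F q.1 q.2) (z, s) := by
        refine integral_congr fun z hz => ?_
        rw [uIcc_of_le zero_le_one] at hz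
        rw [hslice_fst, intervalIntegral_indicator_Iic (div_nonneg (by linarith [hz.2]) ha.le)
          (div_le_div_of_nonneg_right (by linarith [hz.1]) ha.le)]
    _ = ∫ s in (0:ℝ)..1 / a, ∫ z in (0:ℝ)..1, T.indicator (fun q => F q.1 q.2) (z, s) :=
        intervalIntegral_integral_swap zero_le_one (by positivity)
          ((hF.integrableOn_Ioc_prod_Ioc _ _ _ _).indicator hT)
    _ = ∫ s in (0:ℝ)..1 / a, ∫ z in (0:ℝ)..1 - a * s, F z s := by
        refine integral_congr fun s hs => ?_
        rw [uIcc_of_le (by positivity)] at hs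
        have has : a * s ≤ 1 := by
          have := mul_le_mul_of_nonneg_left hs.2 ha.le
          rwa [mul_one_div_cancel ha.ne'] at this
        rw [hslice_snd, intervalIntegral_indicator_Iic (by linarith) (by nlinarith [hs.1])]

/-- The norm in `L²(0,1)`. -/
noncomputable def l2Norm (f : ℝ → ℝ) : ℝ := √(∫ x in (0:ℝ)..1, f x ^ 2)

theorem l2Norm_nonneg (f : ℝ → ℝ) : 0 ≤ l2Norm f := Real.sqrt_nonneg _

theorem sq_l2Norm (f : ℝ → ℝ) : l2Norm f ^ 2 = ∫ x in (0:ℝ)..1, f x ^ 2 :=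
  Real.sq_sqrt (integral_nonneg zero_le_one fun _ _ => sq_nonneg _)

theorem l2Norm_congr {f g : ℝ → ℝ} (h : EqOn f g (Icc 0 1)) : l2Norm f = l2Norm g := by
  unfold l2Norm
  congr 1
  refine integral_congr fun x hx => ?_
  rw [uIcc_of_le (zero_le_one' ℝ)] at hx
  simp only [h hx]

theorem l2Norm_comp_one_sub (f : ℝ → ℝ) : l2Norm (fun x => f (1 - x)) = l2Norm f := by
  simp only [l2Norm, integral_comp_sub_left (fun x => f x ^ 2), sub_self, sub_zero]

theorem l2Norm_neg (f : ℝ → ℝ) : l2Norm (fun x => -f x) = l2Norm f := by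
  simp only [l2Norm, neg_sq]

theorem continuous_l2Norm {F : ℝ → ℝ → ℝ} (hF : Continuous fun q : ℝ × ℝ => F q.1 q.2) :
    Continuous fun s => l2Norm (F · s) :=
  Real.continuous_sqrt.comp <| continuous_parametric_intervalIntegral_of_continuous'
    ((hF.comp₂ continuous_snd continuous_fst).pow 2) 0 1

theorem sqrt_integral_sq_le_l2Norm {f : ℝ → ℝ} (hf : Continuous f) {α β : ℝ} (hα : 0 ≤ α)
    (hαβ : α ≤ β) (hβ : β ≤ 1) : √(∫ x in α..β, f x ^ 2) ≤ l2Norm f :=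
  Real.sqrt_le_sqrt <| integral_mono_interval hα hαβ hβ
    (Filter.Eventually.of_forall fun _ => sq_nonneg _) ((hf.pow 2).intervalIntegrable _ _)

theorem integral_mul_le_l2Norm_mul_l2Norm {f g : ℝ → ℝ} (hf : Continuous f) (hg : Continuous g) :
    ∫ x in (0:ℝ)..1, f x * g x ≤ l2Norm f * l2Norm g :=
  integral_mul_le_sqrt_mul_sqrt zero_le_one hf hg

theorem l2Norm_add_le {f g : ℝ → ℝ} (hf : Continuous f) (hg : Continuous g) :
    l2Norm (fun x => f x + g x) ≤ l2Norm f + l2Norm g := by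
  refine Real.sqrt_le_iff.mpr ⟨add_nonneg (l2Norm_nonneg f) (l2Norm_nonneg g), ?_⟩
  have hexpand : ∫ x in (0:ℝ)..1, (f x + g x) ^ 2
      = l2Norm f ^ 2 + 2 * (∫ x in (0:ℝ)..1, f x * g x) + l2Norm g ^ 2 := by
    calc ∫ x in (0:ℝ)..1, (f x + g x) ^ 2
        = ∫ x in (0:ℝ)..1, (f x ^ 2 + 2 * (f x * g x) + g x ^ 2) :=
          integral_congr fun x _ => by ring
      _ = _ := by
          rw [integral_add, integral_add, integral_const_mul, sq_l2Norm, sq_l2Norm]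
          all_goals exact Continuous.intervalIntegrable (by fun_prop) _ _
  rw [hexpand]
  nlinarith [integral_mul_le_l2Norm_mul_l2Norm hf hg]

theorem l2Norm_mul_le {m f : ℝ → ℝ} (hm : Continuous m) (hf : Continuous f) {C : ℝ}
    (hmC : ∀ x ∈ Icc (0:ℝ) 1, |m x| ≤ C) : l2Norm (fun x => m x * f x) ≤ C * l2Norm f := by
  have hC : 0 ≤ C := (abs_nonneg _).trans (hmC 0 ⟨le_rfl, zero_le_one⟩)
  refine Real.sqrt_le_iff.mpr ⟨mul_nonneg hC (l2Norm_nonneg f), ?_⟩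
  rw [mul_pow, sq_l2Norm, ← integral_const_mul]
  refine integral_mono_on zero_le_one (Continuous.intervalIntegrable (by fun_prop) _ _)
    (Continuous.intervalIntegrable (by fun_prop) _ _) fun x hx => ?_
  rw [mul_pow]
  exact mul_le_mul_of_nonneg_right (sq_le_sq' (abs_le.mp (hmC x hx)).1 (abs_le.mp (hmC x hx)).2)
    (sq_nonneg _)

theorem l2Norm_integral_le_integral_l2Norm {a : ℝ} (ha : 0 < a) {F : ℝ → ℝ → ℝ}
    (hF : Continuous fun q : ℝ × ℝ => F q.1 q.2) :
    l2Norm (fun z => ∫ s in (0:ℝ)..(1 - z) / a, F (z + a * s) s)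
      ≤ ∫ s in (0:ℝ)..1 / a, l2Norm (F · s) := by
  set G : ℝ → ℝ := fun z => ∫ s in (0:ℝ)..(1 - z) / a, F (z + a * s) s
  have hFline : Continuous fun q : ℝ × ℝ => F (q.1 + a * q.2) q.2 :=
    hF.comp₂ (by fun_prop) continuous_snd
  have hG : Continuous G := continuous_parametric_intervalIntegral_of_continuous
    (f := fun z s => F (z + a * s) s) hFline (by fun_prop)
  have hM : 0 ≤ ∫ s in (0:ℝ)..1 / a, l2Norm (F · s) :=
    integral_nonneg (by positivity) fun s _ => l2Norm_nonneg _
  -- Duality: pair `G` with its own defining integral, swap the order of integration and apply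
  -- Cauchy–Schwarz on each slice; dividing by `‖G‖` gives the bound.
  have hslice : ∀ s ∈ Icc (0:ℝ) (1 / a),
      ∫ z in (0:ℝ)..1 - a * s, G z * F (z + a * s) s ≤ l2Norm G * l2Norm (F · s) := by
    intro s hs
    have has : a * s ≤ 1 := by
      have := mul_le_mul_of_nonneg_left hs.2 ha.le
      rwa [mul_one_div_cancel ha.ne'] at this
    have has0 : 0 ≤ a * s := mul_nonneg ha.le hs.1
    have hshift : ∫ z in (0:ℝ)..1 - a * s, F (z + a * s) s ^ 2 = ∫ y in a * s..1, F y s ^ 2 := by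
      rw [integral_comp_add_right (fun y => F y s ^ 2)]
      simp
    refine (integral_mul_le_sqrt_mul_sqrt (by linarith) hG
      (hF.comp₂ (by fun_prop) continuous_const)).trans ?_
    rw [hshift]
    exact mul_le_mul (sqrt_integral_sq_le_l2Norm hG le_rfl (by linarith) (by linarith))
      (sqrt_integral_sq_le_l2Norm (hF.comp₂ continuous_id continuous_const) has0 has le_rfl)
      (Real.sqrt_nonneg _) (l2Norm_nonneg G)
  have hsq : l2Norm G ^ 2 ≤ l2Norm G * ∫ s in (0:ℝ)..1 / a, l2Norm (F · s) :=
    calc l2Norm G ^ 2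
        = ∫ z in (0:ℝ)..1, ∫ s in (0:ℝ)..(1 - z) / a, G z * F (z + a * s) s := by
          rw [sq_l2Norm]
          exact integral_congr fun z _ => by rw [sq, integral_const_mul]
      _ = ∫ s in (0:ℝ)..1 / a, ∫ z in (0:ℝ)..1 - a * s, G z * F (z + a * s) s :=
          integral_integral_swap_triangle ha ((hG.comp continuous_fst).mul hFline)
      _ ≤ ∫ s in (0:ℝ)..1 / a, l2Norm G * l2Norm (F · s) :=
          integral_mono_on (by positivity)
            ((continuous_parametric_intervalIntegral_of_continuous
              (f := fun s z => G z * F (z + a * s) s)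
              ((hG.comp continuous_snd).mul (hF.comp₂ (by fun_prop) continuous_fst))
              (s := fun s => 1 - a * s) (by fun_prop)).intervalIntegrable _ _)
            ((continuous_const.mul (continuous_l2Norm hF)).intervalIntegrable _ _) hslice
      _ = l2Norm G * ∫ s in (0:ℝ)..1 / a, l2Norm (F · s) := integral_const_mul _ _
  nlinarith [l2Norm_nonneg G]

section Calculus

variable {f : ℝ → ℝ → ℝ}

theorem hasDerivAt_partial_fst (hf : ContDiff ℝ 1 fun q : ℝ × ℝ => f q.1 q.2) (x t : ℝ) :
    HasDerivAt (fun y => f y t) (fderiv ℝ (fun q : ℝ × ℝ => f q.1 q.2) (x, t) (1, 0)) x :=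
  (hf.differentiable one_ne_zero (x, t)).hasFDerivAt.comp_hasDerivAt (f := fun y => (y, t)) x
    ((hasDerivAt_id' x).prodMk (hasDerivAt_const x t))

theorem hasDerivAt_partial_snd (hf : ContDiff ℝ 1 fun q : ℝ × ℝ => f q.1 q.2) (x t : ℝ) :
    HasDerivAt (f x) (fderiv ℝ (fun q : ℝ × ℝ => f q.1 q.2) (x, t) (0, 1)) t :=
  (hf.differentiable one_ne_zero (x, t)).hasFDerivAt.comp_hasDerivAt t
    ((hasDerivAt_const t x).prodMk (hasDerivAt_id' t))

theorem continuous_deriv_partial_fst (hf : ContDiff ℝ 1 fun q : ℝ × ℝ => f q.1 q.2) :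
    Continuous fun q : ℝ × ℝ => deriv (fun y => f y q.2) q.1 := by
  simp only [fun q : ℝ × ℝ => (hasDerivAt_partial_fst hf q.1 q.2).deriv]
  exact (hf.continuous_fderiv one_ne_zero).clm_apply continuous_const

theorem continuous_deriv_partial_snd (hf : ContDiff ℝ 1 fun q : ℝ × ℝ => f q.1 q.2) :
    Continuous fun q : ℝ × ℝ => deriv (f q.1) q.2 := by
  simp only [fun q : ℝ × ℝ => (hasDerivAt_partial_snd hf q.1 q.2).deriv]
  exact (hf.continuous_fderiv one_ne_zero).clm_apply continuous_const

theorem hasDerivAt_comp_line (hf : ContDiff ℝ 1 fun q : ℝ × ℝ => f q.1 q.2) (x₀ t₀ v s : ℝ) :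
    HasDerivAt (fun s => f (x₀ + v * s) (t₀ - s))
      (v * deriv (fun y => f y (t₀ - s)) (x₀ + v * s) - deriv (f (x₀ + v * s)) (t₀ - s)) s := by
  set D := fderiv ℝ (fun q : ℝ × ℝ => f q.1 q.2) (x₀ + v * s, t₀ - s)
  have hline : HasDerivAt (fun s : ℝ => (x₀ + v * s, t₀ - s)) (v, -1) s := by
    simpa using ((hasDerivAt_id s).const_mul v |>.const_add x₀).prodMk
      ((hasDerivAt_id s).const_sub t₀)
  have hD : D (v, -1) = v * D (1, 0) - D (0, 1) := by
    rw [show ((v, -1) : ℝ × ℝ) = v • ((1 : ℝ), (0 : ℝ)) - ((0 : ℝ), (1 : ℝ)) by simp,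
      map_sub, map_smul, smul_eq_mul]
  rw [(hasDerivAt_partial_fst hf _ _).deriv, (hasDerivAt_partial_snd hf _ _).deriv, ← hD]
  exact (hf.differentiable one_ne_zero _).hasFDerivAt.comp_hasDerivAt s hline

theorem integral_eq_sub_along_line (hf : ContDiff ℝ 1 fun q : ℝ × ℝ => f q.1 q.2)
    {x₀ t₀ v S : ℝ} (hS : 0 ≤ S) {g : ℝ → ℝ} (hg : Continuous g)
    (hderiv : ∀ s ∈ Ioo 0 S,
      v * deriv (fun y => f y (t₀ - s)) (x₀ + v * s) - deriv (f (x₀ + v * s)) (t₀ - s) = g s) :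
    ∫ s in (0:ℝ)..S, g s = f (x₀ + v * S) (t₀ - S) - f x₀ t₀ := by
  have hcont : Continuous fun s => f (x₀ + v * s) (t₀ - s) :=
    hf.continuous.comp₂ (by fun_prop) (by fun_prop)
  rw [integral_eq_sub_of_hasDeriv_right_of_le hS hcont.continuousOn
    (fun s hs => hderiv s hs ▸ (hasDerivAt_comp_line hf x₀ t₀ v s).hasDerivWithinAt)
    (hg.intervalIntegrable _ _)]
  simp

theorem integral_sub_eq_integral_integral_deriv (hf : ContDiff ℝ 1 fun q : ℝ × ℝ => f q.1 q.2)
    {α β t₁ t₂ : ℝ} (hαβ : α ≤ β) (ht : t₁ ≤ t₂) :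
    ∫ x in α..β, (f x t₂ - f x t₁) = ∫ θ in t₁..t₂, ∫ x in α..β, deriv (f x) θ := by
  rw [← intervalIntegral_integral_swap (F := fun x θ => deriv (f x) θ) hαβ ht
    ((continuous_deriv_partial_snd hf).integrableOn_Ioc_prod_Ioc _ _ _ _)]
  refine integral_congr fun x _ => (integral_deriv_eq_sub (fun θ _ => ?_) ?_).symm
  · exact (hasDerivAt_partial_snd hf x θ).differentiableAt
  · exact ((continuous_deriv_partial_snd hf).comp₂ continuous_const
      continuous_id).intervalIntegrable _ _

end Calculus

section TransportSystem

variable {a Cb : ℝ} {c w u : ℝ → ℝ → ℝ}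

theorem u_eq_integral_along_characteristic (ha : 0 < a)
    (hc : Continuous fun q : ℝ × ℝ => c q.1 q.2) (hw : Continuous fun q : ℝ × ℝ => w q.1 q.2)
    (hu : ContDiff ℝ 1 fun q : ℝ × ℝ => u q.1 q.2)
    (hpde : ∀ x ∈ Ioo (0:ℝ) 1, ∀ t > (0:ℝ),
      deriv (u x) t - a * deriv (fun y => u y t) x + c x t * w x t = 0)
    (hbc : ∀ t > (0:ℝ), u 1 t = 0) {z θ : ℝ} (hz : z ∈ Icc (0:ℝ) 1) (hθ : 1 / a < θ) :
    u z θ = -∫ s in (0:ℝ)..(1 - z) / a, c (z + a * s) (θ - s) * w (z + a * s) (θ - s) := by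
  have hS0 : 0 ≤ (1 - z) / a := div_nonneg (by linarith [hz.2]) ha.le
  have hSa : (1 - z) / a ≤ 1 / a := div_le_div_of_nonneg_right (by linarith [hz.1]) ha.le
  have hend : z + a * ((1 - z) / a) = 1 := by field_simp; ring
  rw [integral_eq_sub_along_line hu (x₀ := z) (t₀ := θ) (v := a) hS0
    (g := fun s => c (z + a * s) (θ - s) * w (z + a * s) (θ - s))
    ((hc.mul hw).comp₂ (by fun_prop) (by fun_prop)) fun s hs => ?_, hend, hbc _ (by linarith)]
  · ring
  · have has : a * s < 1 - z := (lt_div_iff₀' ha).mp hs.2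
    have hx : z + a * s ∈ Ioo (0:ℝ) 1 := ⟨by nlinarith [hz.1, hs.1], by linarith⟩
    linarith [hpde _ hx (θ - s) (by linarith [hs.2])]

theorem w_eq_integral_along_characteristic {p : ℝ} (ha : 0 < a)
    (hw : ContDiff ℝ 1 fun q : ℝ × ℝ => w q.1 q.2) (hu : Continuous fun q : ℝ × ℝ => u q.1 q.2)
    (hpde : ∀ x ∈ Ioo (0:ℝ) 1, ∀ t > (0:ℝ),
      deriv (w x) t + a * deriv (fun y => w y t) x = u x t)
    (hbc : ∀ t > (0:ℝ), w 0 t = p * u 0 t) {z t : ℝ} (hz : z ∈ Icc (0:ℝ) 1) (ht : 1 / a < t) :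
    w (1 - z) t
      = p * u 0 (t - (1 - z) / a) + ∫ s in (0:ℝ)..(1 - z) / a, u (1 - (z + a * s)) (t - s) := by
  have hS0 : 0 ≤ (1 - z) / a := div_nonneg (by linarith [hz.2]) ha.le
  have hSa : (1 - z) / a ≤ 1 / a := div_le_div_of_nonneg_right (by linarith [hz.1]) ha.le
  have hend : 1 - z + -a * ((1 - z) / a) = 0 := by field_simp; ring
  have hline := integral_eq_sub_along_line hw (x₀ := 1 - z) (t₀ := t) (v := -a) hS0
    (g := fun s => -u (1 - (z + a * s)) (t - s)) (hu.comp₂ (by fun_prop) (by fun_prop)).neg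
    fun s hs => ?_
  · rw [integral_neg, hend, hbc _ (by linarith)] at hline
    linarith
  · have has : a * s < 1 - z := (lt_div_iff₀' ha).mp hs.2
    have hx : 1 - z + -a * s = 1 - (z + a * s) := by ring
    rw [hx]
    linarith [hpde (1 - (z + a * s)) ⟨by linarith, by nlinarith [hz.1, hs.1]⟩ (t - s)
      (by linarith [hs.2])]

theorem l2Norm_u_le (ha : 0 < a)
    (hc : Continuous fun q : ℝ × ℝ => c q.1 q.2) (hw : Continuous fun q : ℝ × ℝ => w q.1 q.2)
    (hu : ContDiff ℝ 1 fun q : ℝ × ℝ => u q.1 q.2)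
    (hCb : ∀ x ∈ Icc (0:ℝ) 1, ∀ s ≥ (0:ℝ), |c x s| ≤ Cb)
    (hpde : ∀ x ∈ Ioo (0:ℝ) 1, ∀ t > (0:ℝ),
      deriv (u x) t - a * deriv (fun y => u y t) x + c x t * w x t = 0)
    (hbc : ∀ t > (0:ℝ), u 1 t = 0) {θ : ℝ} (hθ : 1 / a < θ) :
    l2Norm (u · θ) ≤ Cb * ∫ τ in (θ - 1 / a)..θ, l2Norm (w · τ) := by
  have hcw : Continuous fun q : ℝ × ℝ => c q.1 (θ - q.2) * w q.1 (θ - q.2) :=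
    (hc.mul hw).comp₂ continuous_fst (continuous_sub_left θ |>.comp continuous_snd)
  calc l2Norm (u · θ)
      = l2Norm fun z =>
          ∫ s in (0:ℝ)..(1 - z) / a, c (z + a * s) (θ - s) * w (z + a * s) (θ - s) := by
        rw [← l2Norm_neg]
        exact l2Norm_congr fun z hz => by
          simp only [u_eq_integral_along_characteristic ha hc hw hu hpde hbc hz hθ, neg_neg]
    _ ≤ ∫ s in (0:ℝ)..1 / a, l2Norm fun y => c y (θ - s) * w y (θ - s) :=
        l2Norm_integral_le_integral_l2Norm ha (F := fun y s => c y (θ - s) * w y (θ - s)) hcw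
    _ ≤ ∫ s in (0:ℝ)..1 / a, Cb * l2Norm (w · (θ - s)) :=
        integral_mono_on (by positivity) ((continuous_l2Norm hcw).intervalIntegrable _ _)
          ((continuous_const.mul
            ((continuous_l2Norm hw).comp (continuous_sub_left θ))).intervalIntegrable _ _)
          fun s hs => l2Norm_mul_le (hc.comp₂ continuous_id continuous_const)
            (hw.comp₂ continuous_id continuous_const)
            fun x hx => hCb x hx _ (by linarith [hs.2])
    _ = Cb * ∫ τ in (θ - 1 / a)..θ, l2Norm (w · τ) := by
        rw [integral_const_mul, integral_comp_sub_left (fun τ => l2Norm (w · τ))]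
        simp

theorem integral_deriv_sq_le
    (hc : Continuous fun q : ℝ × ℝ => c q.1 q.2) (hw : Continuous fun q : ℝ × ℝ => w q.1 q.2)
    (hu : ContDiff ℝ 1 fun q : ℝ × ℝ => u q.1 q.2)
    (hCb : ∀ x ∈ Icc (0:ℝ) 1, ∀ s ≥ (0:ℝ), |c x s| ≤ Cb)
    (hpde : ∀ x ∈ Ioo (0:ℝ) 1, ∀ t > (0:ℝ),
      deriv (u x) t - a * deriv (fun y => u y t) x + c x t * w x t = 0)
    (hbc : ∀ t > (0:ℝ), u 1 t = 0) {θ : ℝ} (hθ : 0 < θ) :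
    ∫ x in (0:ℝ)..1, deriv (fun τ => u x τ ^ 2) θ
      ≤ -(a * u 0 θ ^ 2) + 2 * Cb * (l2Norm (u · θ) * l2Norm (w · θ)) := by
  have hpointwise : EqOn (fun x => deriv (fun τ => u x τ ^ 2) θ)
      (fun x => a * deriv (fun y => u y θ ^ 2) x + 2 * ((-c x θ * u x θ) * w x θ))
      (Ioo 0 1) := by
    intro x hx
    dsimp only
    rw [deriv_fun_pow (hasDerivAt_partial_snd hu x θ).differentiableAt,
      deriv_fun_pow (hasDerivAt_partial_fst hu x θ).differentiableAt]
    linear_combination (2 * u x θ) * hpde x hx θ hθ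
  have hu_sq : ContDiff ℝ 1 fun q : ℝ × ℝ => u q.1 q.2 ^ 2 := hu.pow 2
  have hDx : Continuous fun x => deriv (fun y => u y θ ^ 2) x :=
    (continuous_deriv_partial_fst (f := fun x τ => u x τ ^ 2) hu_sq).comp₂ continuous_id
      continuous_const
  have hcu : Continuous fun x => -c x θ * u x θ :=
    (hc.comp₂ continuous_id continuous_const).neg.mul
      (hu.continuous.comp₂ continuous_id continuous_const)
  have hwθ : Continuous (w · θ) := hw.comp₂ continuous_id continuous_const
  have hcs :
      ∫ x in (0:ℝ)..1, (-c x θ * u x θ) * w x θ ≤ Cb * l2Norm (u · θ) * l2Norm (w · θ) :=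
    (integral_mul_le_l2Norm_mul_l2Norm hcu hwθ).trans <| mul_le_mul_of_nonneg_right
      (l2Norm_mul_le (hc.comp₂ continuous_id continuous_const).neg
        (hu.continuous.comp₂ continuous_id continuous_const)
        fun x hx => (abs_neg (c x θ)).trans_le (hCb x hx θ hθ.le)) (l2Norm_nonneg _)
  rw [integral_congr_Ioo_of_le zero_le_one hpointwise, integral_add, integral_const_mul,
    integral_const_mul, integral_deriv_eq_sub (f := fun y => u y θ ^ 2), hbc θ hθ]
  · nlinarith
  · exact fun x _ =>
      (hasDerivAt_partial_fst (f := fun x τ => u x τ ^ 2) hu_sq x θ).differentiableAt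
  · exact hDx.intervalIntegrable _ _
  · exact (continuous_const.mul hDx).intervalIntegrable _ _
  · exact (continuous_const.mul (hcu.mul hwθ)).intervalIntegrable _ _

theorem trace_estimate
    (hc : Continuous fun q : ℝ × ℝ => c q.1 q.2) (hw : Continuous fun q : ℝ × ℝ => w q.1 q.2)
    (hu : ContDiff ℝ 1 fun q : ℝ × ℝ => u q.1 q.2)
    (hCb : ∀ x ∈ Icc (0:ℝ) 1, ∀ s ≥ (0:ℝ), |c x s| ≤ Cb)
    (hpde : ∀ x ∈ Ioo (0:ℝ) 1, ∀ t > (0:ℝ),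
      deriv (u x) t - a * deriv (fun y => u y t) x + c x t * w x t = 0)
    (hbc : ∀ t > (0:ℝ), u 1 t = 0) {t₁ t₂ : ℝ} (ht₁ : 0 < t₁) (ht : t₁ ≤ t₂) :
    a * ∫ θ in t₁..t₂, u 0 θ ^ 2
      ≤ l2Norm (u · t₁) ^ 2 + 2 * Cb * ∫ θ in t₁..t₂, l2Norm (u · θ) * l2Norm (w · θ) := by
  have hu_sq : ContDiff ℝ 1 fun q : ℝ × ℝ => u q.1 q.2 ^ 2 := hu.pow 2
  have huc := hu.continuous
  have hu_slice : ∀ τ, IntervalIntegrable (fun x => u x τ ^ 2) MeasureTheory.volume 0 1 :=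
    fun τ => ((huc.comp₂ continuous_id continuous_const).pow 2).intervalIntegrable _ _
  have henergy : l2Norm (u · t₂) ^ 2 - l2Norm (u · t₁) ^ 2
      = ∫ θ in t₁..t₂, ∫ x in (0:ℝ)..1, deriv (fun τ => u x τ ^ 2) θ := by
    rw [sq_l2Norm, sq_l2Norm, ← integral_sub (hu_slice t₂) (hu_slice t₁)]
    exact integral_sub_eq_integral_integral_deriv (f := fun x τ => u x τ ^ 2) hu_sq
      zero_le_one ht
  have hEW : Continuous fun θ => l2Norm (u · θ) * l2Norm (w · θ) :=
    (continuous_l2Norm huc).mul (continuous_l2Norm hw)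
  have hu0 : Continuous fun θ => u 0 θ ^ 2 := (huc.comp₂ continuous_const continuous_id).pow 2
  have hbound : ∫ θ in t₁..t₂, ∫ x in (0:ℝ)..1, deriv (fun τ => u x τ ^ 2) θ
      ≤ ∫ θ in t₁..t₂, (-(a * u 0 θ ^ 2) + 2 * Cb * (l2Norm (u · θ) * l2Norm (w · θ))) :=
    integral_mono_on ht
      ((continuous_parametric_intervalIntegral_of_continuous'
        ((continuous_deriv_partial_snd (f := fun x τ => u x τ ^ 2) hu_sq).comp₂
          continuous_snd continuous_fst) 0 1).intervalIntegrable _ _)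
      (((continuous_const.mul hu0).neg.add (continuous_const.mul hEW)).intervalIntegrable _ _)
      fun θ hθ => integral_deriv_sq_le hc hw hu hCb hpde hbc (ht₁.trans_le hθ.1)
  rw [integral_add (f := fun θ => -(a * u 0 θ ^ 2))
    (g := fun θ => 2 * Cb * (l2Norm (u · θ) * l2Norm (w · θ)))
    ((continuous_const.mul hu0).neg.intervalIntegrable _ _)
    ((continuous_const.mul hEW).intervalIntegrable _ _), integral_neg, integral_const_mul,
    integral_const_mul] at hbound
  nlinarith [sq_nonneg (l2Norm (u · t₂))]

theorem l2Norm_w_le {p : ℝ} (ha : 0 < a)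
    (hw : ContDiff ℝ 1 fun q : ℝ × ℝ => w q.1 q.2) (hu : Continuous fun q : ℝ × ℝ => u q.1 q.2)
    (hpde : ∀ x ∈ Ioo (0:ℝ) 1, ∀ t > (0:ℝ),
      deriv (w x) t + a * deriv (fun y => w y t) x = u x t)
    (hbc : ∀ t > (0:ℝ), w 0 t = p * u 0 t) {t : ℝ} (ht : 1 / a < t) :
    l2Norm (w · t) ≤ |p| * √(a * ∫ θ in (t - 1 / a)..t, u 0 θ ^ 2)
      + ∫ θ in (t - 1 / a)..t, l2Norm (u · θ) := by
  have hF : Continuous fun q : ℝ × ℝ => u (1 - q.1) (t - q.2) :=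
    hu.comp₂ (by fun_prop) (by fun_prop)
  have hboundary : l2Norm (fun z => p * u 0 (t - (1 - z) / a))
      = |p| * √(a * ∫ θ in (t - 1 / a)..t, u 0 θ ^ 2) := by
    have hsubst : ∫ z in (0:ℝ)..1, u 0 (t - (1 - z) / a) ^ 2
        = a * ∫ θ in (t - 1 / a)..t, u 0 θ ^ 2 := by
      have := integral_comp_add_div (fun θ => u 0 θ ^ 2) ha.ne' (t - 1 / a) (a := 0) (b := 1)
      simp only [zero_div, add_zero, sub_add_cancel, smul_eq_mul] at this
      rw [← this]
      exact integral_congr fun z _ => by ring_nf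
    simp only [l2Norm, mul_pow]
    rw [integral_const_mul, hsubst, Real.sqrt_mul (sq_nonneg p), Real.sqrt_sq_eq_abs]
  have hinterior : l2Norm (fun z => ∫ s in (0:ℝ)..(1 - z) / a, u (1 - (z + a * s)) (t - s))
      ≤ ∫ θ in (t - 1 / a)..t, l2Norm (u · θ) := by
    calc _ ≤ ∫ s in (0:ℝ)..1 / a, l2Norm fun y => u (1 - y) (t - s) :=
          l2Norm_integral_le_integral_l2Norm ha (F := fun y s => u (1 - y) (t - s)) hF
      _ = ∫ s in (0:ℝ)..1 / a, l2Norm (u · (t - s)) :=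
          integral_congr fun s _ => l2Norm_comp_one_sub (u · (t - s))
      _ = ∫ θ in (t - 1 / a)..t, l2Norm (u · θ) := by
          rw [integral_comp_sub_left (fun θ => l2Norm (u · θ))]
          simp
  calc l2Norm (w · t)
      = l2Norm fun z => p * u 0 (t - (1 - z) / a)
          + ∫ s in (0:ℝ)..(1 - z) / a, u (1 - (z + a * s)) (t - s) := by
        rw [← l2Norm_comp_one_sub]
        exact l2Norm_congr fun z hz => w_eq_integral_along_characteristic ha hw hu hpde hbc hz ht
    _ ≤ l2Norm (fun z => p * u 0 (t - (1 - z) / a))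
          + l2Norm fun z => ∫ s in (0:ℝ)..(1 - z) / a, u (1 - (z + a * s)) (t - s) :=
        l2Norm_add_le (continuous_const.mul (hu.comp₂ continuous_const (by fun_prop)))
          (continuous_parametric_intervalIntegral_of_continuous
            (f := fun z s => u (1 - (z + a * s)) (t - s)) (hu.comp₂ (by fun_prop) (by fun_prop))
            (by fun_prop))
    _ ≤ _ := add_le_add hboundary.le hinterior

theorem l2Norm_w_le_of_l2Norm_u_le {p M : ℝ} (ha : 0 < a)
    (hc : Continuous fun q : ℝ × ℝ => c q.1 q.2) (hw : ContDiff ℝ 1 fun q : ℝ × ℝ => w q.1 q.2)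
    (hu : ContDiff ℝ 1 fun q : ℝ × ℝ => u q.1 q.2)
    (hCb : ∀ x ∈ Icc (0:ℝ) 1, ∀ s ≥ (0:ℝ), |c x s| ≤ Cb)
    (hpde_w : ∀ x ∈ Ioo (0:ℝ) 1, ∀ t > (0:ℝ),
      deriv (w x) t + a * deriv (fun y => w y t) x = u x t)
    (hpde_u : ∀ x ∈ Ioo (0:ℝ) 1, ∀ t > (0:ℝ),
      deriv (u x) t - a * deriv (fun y => u y t) x + c x t * w x t = 0)
    (hbc_w : ∀ t > (0:ℝ), w 0 t = p * u 0 t) (hbc_u : ∀ t > (0:ℝ), u 1 t = 0)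
    {t : ℝ} (ht : 1 / a < t) (hu_le : ∀ θ ∈ Icc (t - 1 / a) t, l2Norm (u · θ) ≤ M)
    (hw_le : Cb * ∫ θ in (t - 1 / a)..t, l2Norm (w · θ) ≤ M) :
    l2Norm (w · t) ≤ (√3 * |p| + 1 / a) * M := by
  have h1a : 0 < 1 / a := by positivity
  have hCb0 : 0 ≤ Cb := (abs_nonneg _).trans (hCb 0 ⟨le_rfl, zero_le_one⟩ 0 le_rfl)
  have hM : 0 ≤ M := (l2Norm_nonneg _).trans (hu_le t ⟨by linarith, le_rfl⟩)
  have hEW : ∫ θ in (t - 1 / a)..t, l2Norm (u · θ) * l2Norm (w · θ)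
      ≤ M * ∫ θ in (t - 1 / a)..t, l2Norm (w · θ) := by
    rw [← integral_const_mul]
    exact integral_mono_on (by linarith)
      (((continuous_l2Norm hu.continuous).mul
        (continuous_l2Norm hw.continuous)).intervalIntegrable _ _)
      ((continuous_const.mul (continuous_l2Norm hw.continuous)).intervalIntegrable _ _)
      fun θ hθ => mul_le_mul_of_nonneg_right (hu_le θ hθ) (l2Norm_nonneg _)
  have htrace : a * ∫ θ in (t - 1 / a)..t, u 0 θ ^ 2 ≤ (√3 * M) ^ 2 := by
    rw [mul_pow, Real.sq_sqrt zero_le_three]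
    nlinarith [trace_estimate hc hw.continuous hu hCb hpde_u hbc_u (t₁ := t - 1 / a) (t₂ := t)
      (by linarith) (by linarith),
      pow_le_pow_left₀ (l2Norm_nonneg _) (hu_le _ ⟨le_rfl, by linarith⟩) 2]
  have hu_integral : ∫ θ in (t - 1 / a)..t, l2Norm (u · θ) ≤ 1 / a * M := by
    refine (integral_mono_on (by linarith)
      ((continuous_l2Norm hu.continuous).intervalIntegrable _ _)
      (continuous_const.intervalIntegrable _ _) hu_le).trans_eq ?_
    rw [integral_const, sub_sub_cancel, smul_eq_mul]
  calc l2Norm (w · t)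
      ≤ |p| * √(a * ∫ θ in (t - 1 / a)..t, u 0 θ ^ 2)
          + ∫ θ in (t - 1 / a)..t, l2Norm (u · θ) :=
        l2Norm_w_le ha hw hu.continuous hpde_w hbc_w (by linarith)
    _ ≤ |p| * (√3 * M) + 1 / a * M :=
        add_le_add (mul_le_mul_of_nonneg_left (Real.sqrt_le_iff.mpr ⟨by positivity, htrace⟩)
          (abs_nonneg p)) hu_integral
    _ = (√3 * |p| + 1 / a) * M := by ring

end TransportSystem

/-- the key integral inequality (16) in the proof of Theorem 1.
There is a constant `K > 0`, depending only on `a` and `p`, such that for every bounded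
continuous coefficient `c` (with bound `Cb` on `[0,1]×[0,∞)`) and every `C¹` solution
`(w,u)` of the first-order system with boundary conditions `w(0,t) = p·u(0,t)`,
`u(1,t) = 0`, the function `W(t) = ‖w(·,t)‖_{L²(0,1)}` satisfies
`W(t) ≤ K · Cb · ∫_{t−4/a}^{t} W(τ) dτ` for `t > 4/a`. -/
theorem L2_norm_integral_inequality
    (a p : ℝ) (ha : 0 < a) :
    ∃ K > (0:ℝ),
      ∀ c : ℝ → ℝ → ℝ,
        Continuous (fun q : ℝ × ℝ => c q.1 q.2) →
        ∀ Cb : ℝ, (∀ x ∈ Set.Icc (0:ℝ) 1, ∀ s ≥ (0:ℝ), |c x s| ≤ Cb) →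
      ∀ w u : ℝ → ℝ → ℝ,
        ContDiff ℝ 1 (fun q : ℝ × ℝ => w q.1 q.2) →
        ContDiff ℝ 1 (fun q : ℝ × ℝ => u q.1 q.2) →
        -- ∂ₜw + a∂ₓw = u on (0,1)×(0,∞)
        (∀ x ∈ Set.Ioo (0:ℝ) 1, ∀ t > (0:ℝ),
          deriv (w x) t + a * deriv (fun y => w y t) x = u x t) →
        -- ∂ₜu − a∂ₓu + c·w = 0 on (0,1)×(0,∞)
        (∀ x ∈ Set.Ioo (0:ℝ) 1, ∀ t > (0:ℝ),
          deriv (u x) t - a * deriv (fun y => u y t) x + c x t * w x t = 0) →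
        -- boundary conditions
        (∀ t > (0:ℝ), w 0 t = p * u 0 t) →
        (∀ t > (0:ℝ), u 1 t = 0) →
      ∀ t > 4 / a,
        Real.sqrt (∫ x in (0:ℝ)..1, (w x t) ^ 2) ≤
          K * Cb * ∫ τ in (t - 4 / a)..t,
            Real.sqrt (∫ x in (0:ℝ)..1, (w x τ) ^ 2) := by
  refine ⟨√3 * |p| + 1 / a, by positivity, ?_⟩
  intro c hc Cb hCb w u hw hu hpde_w hpde_u hbc_w hbc_u t ht
  change l2Norm (w · t) ≤ _ * Cb * ∫ τ in (t - 4 / a)..t, l2Norm (w · τ)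
  have h1a : 0 < 1 / a := by positivity
  have h4a : 4 / a = 4 * (1 / a) := by ring
  have hCb0 : 0 ≤ Cb := (abs_nonneg _).trans (hCb 0 ⟨le_rfl, zero_le_one⟩ 0 le_rfl)
  have hwindow : ∀ θ ∈ Icc (t - 1 / a) t,
      ∫ τ in (θ - 1 / a)..θ, l2Norm (w · τ) ≤ ∫ τ in (t - 4 / a)..t, l2Norm (w · τ) :=
    fun θ hθ => integral_mono_interval (by linarith [hθ.1]) (by linarith) hθ.2
      (Filter.Eventually.of_forall fun _ => l2Norm_nonneg _)
      ((continuous_l2Norm hw.continuous).intervalIntegrable _ _)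
  rw [mul_assoc]
  refine l2Norm_w_le_of_l2Norm_u_le ha hc hw hu hCb hpde_w hpde_u hbc_w hbc_u (by linarith)
    (fun θ hθ => (l2Norm_u_le ha hc hw.continuous hu hCb hpde_u hbc_u
      (by linarith [hθ.1])).trans ?_)
    (mul_le_mul_of_nonneg_left (hwindow t ⟨by linarith, le_rfl⟩) hCb0)
  exact mul_le_mul_of_nonneg_left (hwindow θ hθ) hCb0
end

section
/- Let h > 0 and C ≥ 0, and let W : [0,∞) → [0,∞) be a continuous function such that W(t) ≤ C for all t ∈ [0,h]. For every γ > 0 there exist δ₀ > 0 and M > 0 (depending only on γ and h) such that: if δ ∈ [0,δ₀] and W satisfies W(t) ≤ δ ∫_{t−h}^{t} W(τ) dτ for all t > h, then W(t) ≤ M C e^{−γ t} for all t ≥ 0. -/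
/-!
Put `V t = W t * exp (γ t)`. On a window `[s - h, s]` the weight `exp (γ τ)` loses at most a
factor `exp (γ h)` against `exp (γ s)`, so for `s > h` the memory inequality reads
`V s ≤ δ h exp (γ h) · max_{[0,s]} V`. With `δ h exp (γ h) < 1`, the maximum of `V` over `[0,t]`
cannot sit beyond `h` unless it is `≤ 0`, hence `V ≤ C exp (γ h)` everywhere, which is the claim
with `M = exp (γ h)`.
-/

open Real Set

theorem ContinuousOn.le_of_le_on_Icc_of_le_mul_bound {V : ℝ → ℝ} {h B θ : ℝ}
    (hV : ContinuousOn V (Ici 0)) (hB : 0 ≤ B) (hθ : θ < 1)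
    (hinit : ∀ τ ∈ Icc 0 h, V τ ≤ B)
    (hstep : ∀ s > h, ∀ K, (∀ τ ∈ Icc 0 s, V τ ≤ K) → V s ≤ θ * K) :
    ∀ t ≥ 0, V t ≤ B := by
  intro t ht
  obtain ⟨s, ⟨hs0, hst⟩, hmax⟩ :=
    isCompact_Icc.exists_isMaxOn (nonempty_Icc.2 ht) (hV.mono Icc_subset_Ici_self)
  have hVs : V t ≤ V s := hmax ⟨ht, le_rfl⟩
  rcases le_or_gt s h with hsh | hsh
  · exact hVs.trans (hinit s ⟨hs0, hsh⟩)
  · have hself : V s ≤ θ * V s :=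
      hstep s hsh (V s) fun τ hτ => hmax ⟨hτ.1, hτ.2.trans hst⟩
    nlinarith

theorem exp_mul_intervalIntegral_le_of_mul_exp_le {W : ℝ → ℝ} {γ h s K : ℝ}
    (hγ : 0 ≤ γ) (hh : 0 ≤ h) (hW : ∀ τ ∈ Icc (s - h) s, 0 ≤ W τ)
    (hWK : ∀ τ ∈ Icc (s - h) s, W τ * exp (γ * τ) ≤ K) :
    exp (γ * s) * ∫ τ in (s - h)..s, W τ ≤ h * exp (γ * h) * K := by
  have hsh : s - h ≤ s := by linarith
  have hK : 0 ≤ K := (mul_nonneg (hW s ⟨hsh, le_rfl⟩) (exp_pos _).le).trans (hWK s ⟨hsh, le_rfl⟩)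
  have hpoint : ∀ τ ∈ uIoc (s - h) s, ‖W τ‖ ≤ K * exp (γ * (h - s)) := by
    intro τ hτ
    rw [uIoc_of_le hsh] at hτ
    have hτ' : τ ∈ Icc (s - h) s := Ioc_subset_Icc_self hτ
    rw [Real.norm_of_nonneg (hW τ hτ')]
    calc W τ = W τ * exp (γ * τ) * exp (-(γ * τ)) := by rw [mul_assoc, ← exp_add]; simp
      _ ≤ K * exp (γ * (h - s)) := by
        gcongr
        · exact hWK τ hτ'
        · nlinarith [hτ.1]
  have hint : ∫ τ in (s - h)..s, W τ ≤ K * exp (γ * (h - s)) * h := by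
    have := intervalIntegral.norm_integral_le_of_norm_le_const hpoint
    rw [show s - (s - h) = h by ring, abs_of_nonneg hh] at this
    exact (le_abs_self _).trans this
  calc exp (γ * s) * ∫ τ in (s - h)..s, W τ
      ≤ exp (γ * s) * (K * exp (γ * (h - s)) * h) := by gcongr
    _ = h * (exp (γ * s) * exp (γ * (h - s))) * K := by ring
    _ = h * exp (γ * h) * K := by rw [← exp_add]; ring_nf

/-- the Gronwall-type decay lemma underlying Theorem 1.
Let `h > 0`. For every `γ > 0` there exist `δ₀ > 0` and `M > 0`, depending only on `γ`
and `h`, such that: if `C ≥ 0` and `W : [0,∞) → [0,∞)` is continuous with `W ≤ C` on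
`[0,h]`, and if `0 ≤ δ ≤ δ₀` and `W(t) ≤ δ ∫_{t−h}^{t} W(τ) dτ` for all `t > h`,
then `W(t) ≤ M C e^{−γ t}` for all `t ≥ 0`. -/
theorem memory_integral_inequality_exponential_decay
    (h : ℝ) (hh : 0 < h) :
    ∀ γ > (0:ℝ), ∃ δ₀ > (0:ℝ), ∃ M > (0:ℝ),
      ∀ C : ℝ, 0 ≤ C →
      ∀ W : ℝ → ℝ,
        ContinuousOn W (Set.Ici 0) →
        (∀ t ≥ (0:ℝ), 0 ≤ W t) →
        (∀ t ∈ Set.Icc (0:ℝ) h, W t ≤ C) →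
      ∀ δ : ℝ, 0 ≤ δ → δ ≤ δ₀ →
        (∀ t > h, W t ≤ δ * ∫ τ in (t - h)..t, W τ) →
      ∀ t ≥ (0:ℝ), W t ≤ M * C * Real.exp (-γ * t) := by
  intro γ hγ
  refine ⟨exp (-(γ * h)) / (2 * h), by positivity, exp (γ * h), exp_pos _, ?_⟩
  intro C hC W hWc hW0 hWinit δ hδ0 hδ hWmem t ht
  have hθ : δ * h * exp (γ * h) < 1 :=
    calc δ * h * exp (γ * h) ≤ exp (-(γ * h)) / (2 * h) * h * exp (γ * h) := by gcongr
      _ = 1 / 2 := by rw [exp_neg]; field_simp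
      _ < 1 := by norm_num
  have hV : ∀ t ≥ 0, W t * exp (γ * t) ≤ C * exp (γ * h) := by
    refine ContinuousOn.le_of_le_on_Icc_of_le_mul_bound (V := fun t => W t * exp (γ * t)) (h := h)
      (hWc.mul (by fun_prop)) (by positivity) hθ ?_ ?_
    · intro τ hτ
      gcongr
      exacts [hWinit τ hτ, hτ.2]
    · intro s hs K hK
      have hwin : ∀ τ ∈ Icc (s - h) s, 0 ≤ τ := fun τ hτ => by linarith [hτ.1]
      calc W s * exp (γ * s) ≤ δ * (exp (γ * s) * ∫ τ in (s - h)..s, W τ) := by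
            rw [mul_comm (W s), mul_left_comm]
            gcongr
            exact hWmem s hs
        _ ≤ δ * (h * exp (γ * h) * K) :=
            mul_le_mul_of_nonneg_left (exp_mul_intervalIntegral_le_of_mul_exp_le hγ.le hh.le
              (fun τ hτ => hW0 τ (hwin τ hτ)) fun τ hτ => hK τ ⟨hwin τ hτ, hτ.2⟩) hδ0
        _ = δ * h * exp (γ * h) * K := by ring
  calc W t = W t * exp (γ * t) * exp (-γ * t) := by rw [mul_assoc, ← exp_add]; simp
    _ ≤ C * exp (γ * h) * exp (-γ * t) := mul_le_mul_of_nonneg_right (hV t ht) (exp_pos _).le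
    _ = exp (γ * h) * C * exp (-γ * t) := by ring
end

section
/- Let a > 0 and p ∈ ℝ, and let w, u : [0,1]×[0,∞) → ℝ be continuously differentiable functions satisfying the decoupled transport system ∂_t w + a ∂_x w = 0 and ∂_t u − a ∂_x u = 0 on (0,1)×(0,∞), together with the boundary conditions w(0,t) = p·u(0,t) and u(1,t) = 0 for all t > 0. Then u(x,t) = 0 for every x ∈ [0,1] and every t > (1−x)/a, and w(x,t) = 0 for every x ∈ [0,1] and every t > (1+x)/a. In particular, both w and u vanish identically for t > 2/a. -/
/-!
Along a characteristic `r ↦ (x - c r, t - r)` the transport operator `∂ₜ + c ∂ₓ` is the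
derivative in `r`, so a solution is constant there (mean value theorem). For `u` (speed `-a`)
the characteristic through `(x, t)` meets `x = 1`, where `u` vanishes, at the positive time
`t - (1 - x)/a`. For `w` (speed `a`) it meets `x = 0` at time `t - x/a`, and there
`w = p u = 0` as soon as `t - x/a > 1/a`, by the first part.
-/

open Set Function

section Transport

variable {f : ℝ → ℝ → ℝ} {x t : ℝ}

theorem fderiv_uncurry_apply (hf : DifferentiableAt ℝ (uncurry f) (x, t)) (v : ℝ × ℝ) :
    fderiv ℝ (uncurry f) (x, t) v =
      v.1 * deriv (fun y => f y t) x + v.2 * deriv (f x) t := by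
  set L := fderiv ℝ (uncurry f) (x, t)
  have hx : HasDerivAt (fun y => f y t) (L (1, 0)) x :=
    hf.hasFDerivAt.comp_hasDerivAt (f := fun y => (y, t)) x
      ((hasDerivAt_id x).prodMk (hasDerivAt_const x t))
  have ht : HasDerivAt (f x) (L (0, 1)) t :=
    hf.hasFDerivAt.comp_hasDerivAt (f := fun s => (x, s)) t
      ((hasDerivAt_const t x).prodMk (hasDerivAt_id t))
  have hv : v = v.1 • ((1 : ℝ), (0 : ℝ)) + v.2 • ((0 : ℝ), (1 : ℝ)) := by
    ext <;> simp
  rw [hx.deriv, ht.deriv, hv, map_add, map_smul, map_smul, smul_eq_mul, smul_eq_mul]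
  simp

theorem eq_of_transport_along_characteristic (hf : Differentiable ℝ (uncurry f))
    {c τ : ℝ} (hτ : 0 ≤ τ)
    (hpde : ∀ r ∈ Ioo 0 τ,
      deriv (f (x - c * r)) (t - r) + c * deriv (fun y => f y (t - r)) (x - c * r) = 0) :
    f (x - c * τ) (t - τ) = f x t := by
  rcases hτ.eq_or_lt with rfl | hτ
  · simp
  set g : ℝ → ℝ := fun r => uncurry f (x - c * r, t - r)
  have hg : ∀ r, HasDerivAt g (fderiv ℝ (uncurry f) (x - c * r, t - r) (-c, -1)) r := by
    intro r
    have hγ : HasDerivAt (fun r => (x - c * r, t - r)) ((-c, -1) : ℝ × ℝ) r := by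
      simpa using (((hasDerivAt_id' r).const_mul c).const_sub x).prodMk
        ((hasDerivAt_id' r).const_sub t)
    exact (hf _).hasFDerivAt.comp_hasDerivAt r hγ
  have hg_zero : ∀ r ∈ Ioo 0 τ, fderiv ℝ (uncurry f) (x - c * r, t - r) (-c, -1) = 0 := by
    intro r hr
    rw [fderiv_uncurry_apply (hf _), ← neg_eq_zero, ← hpde r hr]
    ring
  obtain ⟨r, hr, hslope⟩ := exists_hasDerivAt_eq_slope g _ hτ
    (continuousOn_of_forall_continuousAt fun r _ => (hg r).continuousAt) fun r _ => hg r
  rw [hg_zero r hr, eq_comm, div_eq_zero_iff, sub_eq_zero] at hslope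
  simpa [g, hτ.ne'] using hslope

end Transport

section Extinction

variable {a T : ℝ} {f : ℝ → ℝ → ℝ} {x t : ℝ}

theorem eq_zero_of_leftward_transport (ha : 0 < a) (hT : 0 ≤ T)
    (hf : Differentiable ℝ (uncurry f))
    (hpde : ∀ x ∈ Ioo (0 : ℝ) 1, ∀ t > 0, deriv (f x) t - a * deriv (fun y => f y t) x = 0)
    (hbc : ∀ t > T, f 1 t = 0) (hx : x ∈ Icc (0 : ℝ) 1) (ht : T + (1 - x) / a < t) :
    f x t = 0 := by
  have hτ : 0 ≤ (1 - x) / a := div_nonneg (by linarith [hx.2]) ha.le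
  have hchar := eq_of_transport_along_characteristic hf (c := -a) (x := x) (t := t) hτ
    fun r hr => by
      have har : a * r < 1 - x := (lt_div_iff₀' ha).1 hr.2
      have hmem : x - -a * r ∈ Ioo (0 : ℝ) 1 := ⟨by nlinarith [hx.1, hr.1], by linarith⟩
      linarith [hpde _ hmem (t - r) (by linarith [hr.2])]
  have hfoot : x - -a * ((1 - x) / a) = 1 := by field_simp; ring
  rw [← hchar, hfoot]
  exact hbc _ (by linarith)

theorem eq_zero_of_rightward_transport (ha : 0 < a) (hT : 0 ≤ T)
    (hf : Differentiable ℝ (uncurry f))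
    (hpde : ∀ x ∈ Ioo (0 : ℝ) 1, ∀ t > 0, deriv (f x) t + a * deriv (fun y => f y t) x = 0)
    (hbc : ∀ t > T, f 0 t = 0) (hx : x ∈ Icc (0 : ℝ) 1) (ht : T + x / a < t) :
    f x t = 0 := by
  have hτ : 0 ≤ x / a := div_nonneg hx.1 ha.le
  have hchar := eq_of_transport_along_characteristic hf (c := a) (x := x) (t := t) hτ
    fun r hr => by
      have har : a * r < x := (lt_div_iff₀' ha).1 hr.2
      have hmem : x - a * r ∈ Ioo (0 : ℝ) 1 := ⟨by linarith, by nlinarith [hx.2, hr.1]⟩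
      exact hpde _ hmem (t - r) (by linarith [hr.2])
  have hfoot : x - a * (x / a) = 0 := by field_simp; ring
  rw [← hchar, hfoot]
  exact hbc _ (by linarith)

end Extinction

/-- superstability of the decoupled system (11) of the paper.
If `(w,u)` is a `C¹` solution of the decoupled transport system
`∂ₜw + a∂ₓw = 0`, `∂ₜu − a∂ₓu = 0` on `(0,1)×(0,∞)` with boundary conditions
`w(0,t) = p·u(0,t)` and `u(1,t) = 0`, then `u(x,t) = 0` for `t > (1−x)/a`,
`w(x,t) = 0` for `t > (1+x)/a`; in particular both vanish for `t > 2/a`. -/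
theorem decoupled_transport_finite_time_extinction
    (a p : ℝ) (ha : 0 < a)
    (w u : ℝ → ℝ → ℝ)
    (hw : ContDiff ℝ 1 (fun q : ℝ × ℝ => w q.1 q.2))
    (hu : ContDiff ℝ 1 (fun q : ℝ × ℝ => u q.1 q.2))
    -- ∂ₜw + a∂ₓw = 0 on (0,1)×(0,∞)
    (heq1 : ∀ x ∈ Set.Ioo (0:ℝ) 1, ∀ t > (0:ℝ),
      deriv (w x) t + a * deriv (fun y => w y t) x = 0)
    -- ∂ₜu − a∂ₓu = 0 on (0,1)×(0,∞)
    (heq2 : ∀ x ∈ Set.Ioo (0:ℝ) 1, ∀ t > (0:ℝ),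
      deriv (u x) t - a * deriv (fun y => u y t) x = 0)
    -- boundary conditions
    (hbc0 : ∀ t > (0:ℝ), w 0 t = p * u 0 t)
    (hbc1 : ∀ t > (0:ℝ), u 1 t = 0) :
    (∀ x ∈ Set.Icc (0:ℝ) 1, ∀ t : ℝ, t > (1 - x) / a → u x t = 0) ∧
    (∀ x ∈ Set.Icc (0:ℝ) 1, ∀ t : ℝ, t > (1 + x) / a → w x t = 0) ∧
    (∀ x ∈ Set.Icc (0:ℝ) 1, ∀ t : ℝ, t > 2 / a → w x t = 0 ∧ u x t = 0) := by
  have hu_zero : ∀ x ∈ Icc (0 : ℝ) 1, ∀ t : ℝ, t > (1 - x) / a → u x t = 0 :=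
    fun x hx t ht => eq_zero_of_leftward_transport ha le_rfl (hu.differentiable one_ne_zero)
      heq2 hbc1 hx (by linarith)
  have hw_bc : ∀ t > 1 / a, w 0 t = 0 := fun t ht => by
    rw [hbc0 t ((one_div_pos.2 ha).trans ht), hu_zero 0 (by simp) t (by simpa using ht),
      mul_zero]
  have hw_zero : ∀ x ∈ Icc (0 : ℝ) 1, ∀ t : ℝ, t > (1 + x) / a → w x t = 0 :=
    fun x hx t ht => eq_zero_of_rightward_transport ha (one_div_pos.2 ha).le
      (hw.differentiable one_ne_zero) heq1 hw_bc hx (by rwa [← add_div])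
  refine ⟨hu_zero, hw_zero, fun x hx t ht => ⟨hw_zero x hx t ?_, hu_zero x hx t ?_⟩⟩
  · exact lt_of_le_of_lt (by gcongr; linarith [hx.2]) ht
  · exact lt_of_le_of_lt (by gcongr; linarith [hx.1]) ht
end

section
/- Let a > 0, p ∈ ℝ, and let a₁ : [0,1]×[0,∞) → ℝ be continuous and bounded. Let w : [0,1]×[0,∞) → ℝ be twice continuously differentiable and satisfy (∂_t − a ∂_x + a₁(x,t))(∂_t + a ∂_x) w = 0 on (0,1)×(0,∞), i.e., the function u := ∂_t w + a ∂_x w satisfies ∂_t u − a ∂_x u + a₁·u = 0 on (0,1)×(0,∞); suppose moreover that w(0,t) = p·(∂_t w + a ∂_x w)(0,t) and (∂_t w + a ∂_x w)(1,t) = 0 for all t > 0. Then w(x,t) = 0 for every x ∈ [0,1] and every t > 2/a. -/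
/-!
Set `u := ∂ₜw + a∂ₓw`. The equation says that `u` is transported to the left with speed `a`
and damped by the bounded factor `a₁`; along each backward characteristic
`s ↦ (x - a(s - t), s)` Grönwall's inequality propagates the boundary value `u(1, ·) = 0`, so
`u` vanishes once `t > 1/a`. From then on `w` is constant along the forward characteristics
`s ↦ (x + a(s - t), s)`, which start at `x = 0` where `w = p·u = 0`; every point of `[0,1]`
is reached after a further time `1/a`.
-/

open Set Filter Topology

theorem eq_zero_of_norm_deriv_le_mul_norm_of_eq_zero_left
    {E : Type*} [NormedAddCommGroup E] [NormedSpace ℝ E] {f f' : ℝ → E} {K a b : ℝ}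
    (hab : a < b) (hf : ContinuousOn f (Icc a b)) (hf' : ∀ x ∈ Ioo a b, HasDerivAt f (f' x) x)
    (ha : f a = 0) (bound : ∀ x ∈ Ioo a b, ‖f' x‖ ≤ K * ‖f x‖) : f b = 0 := by
  -- The derivative is only controlled on the open interval: Grönwall on `[s, b]`, then `s → a`.
  have hgronwall : ∀ s ∈ Ioo a b, ‖f b‖ ≤ ‖f s‖ * Real.exp (K * (b - s)) := by
    intro s hs
    have hsub : ∀ x ∈ Ico s b, x ∈ Ioo a b := fun x hx => ⟨hs.1.trans_le hx.1, hx.2⟩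
    have := norm_le_gronwallBound_of_norm_deriv_right_le (K := K) (ε := 0)
      (hf.mono (Icc_subset_Icc_left hs.1.le)) (fun x hx => (hf' x (hsub x hx)).hasDerivWithinAt)
      le_rfl (fun x hx => (add_zero (K * ‖f x‖)).symm ▸ bound x (hsub x hx)) b ⟨hs.2.le, le_rfl⟩
    rwa [gronwallBound_ε0] at this
  have hlim : Tendsto (fun s => ‖f s‖ * Real.exp (K * (b - s))) (𝓝[>] a) (𝓝 0) := by
    have hcont : ContinuousWithinAt (fun s => ‖f s‖ * Real.exp (K * (b - s))) (Icc a b) a :=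
      (hf a ⟨le_rfl, hab.le⟩).norm.mul (by fun_prop)
    simpa [ha] using hcont.tendsto.mono_left (nhdsWithin_le_of_mem (Icc_mem_nhdsGT hab))
  exact norm_le_zero_iff.1 <| ge_of_tendsto hlim <| by
    filter_upwards [Ioo_mem_nhdsGT hab] with s hs using hgronwall s hs

theorem deriv_add_mul_deriv_eq_fderiv {f : ℝ × ℝ → ℝ} {x t : ℝ}
    (hf : DifferentiableAt ℝ f (x, t)) (a : ℝ) :
    deriv (fun s => f (x, s)) t + a * deriv (fun y => f (y, t)) x = fderiv ℝ f (x, t) (a, 1) := by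
  have ht : HasDerivAt (fun s => f (x, s)) (fderiv ℝ f (x, t) (0, 1)) t :=
    hf.hasFDerivAt.comp_hasDerivAt t ((hasDerivAt_const t x).prodMk (hasDerivAt_id t))
  have hx : HasDerivAt (fun y => f (y, t)) (fderiv ℝ f (x, t) (1, 0)) x :=
    hf.hasFDerivAt.comp_hasDerivAt x ((hasDerivAt_id x).prodMk (hasDerivAt_const x t))
  have hsplit : ((a, 1) : ℝ × ℝ) = (0, 1) + a • (1, 0) := by simp
  rw [ht.deriv, hx.deriv, hsplit, map_add, map_smul, smul_eq_mul]

theorem hasDerivAt_comp_line_s13 {F : Type*} [NormedAddCommGroup F] [NormedSpace ℝ F]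
    {f : ℝ × ℝ → F} {x t c s : ℝ} (hf : DifferentiableAt ℝ f (x + c * (s - t), s)) :
    HasDerivAt (fun s => f (x + c * (s - t), s)) (fderiv ℝ f (x + c * (s - t), s) (c, 1)) s := by
  have hline : HasDerivAt (fun s => x + c * (s - t)) c s := by
    simpa using (((hasDerivAt_id s).sub_const t).const_mul c).const_add x
  have hcurve : HasDerivAt (fun s => (x + c * (s - t), s)) ((c, 1) : ℝ × ℝ) s :=
    hline.prodMk (hasDerivAt_id s)
  exact HasFDerivAt.comp_hasDerivAt (f := fun s => (x + c * (s - t), s)) s hf.hasFDerivAt hcurve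

section Transport

variable {a T : ℝ}

theorem eq_zero_of_leftTransport_of_eq_zero_at_one {u : ℝ × ℝ → ℝ} {B : ℝ} (ha : 0 < a)
    (hu : Differentiable ℝ u)
    (hpde : ∀ x ∈ Ioo (0 : ℝ) 1, ∀ t > T, |fderiv ℝ u (x, t) (-a, 1)| ≤ B * |u (x, t)|)
    (hbc : ∀ t > T, u (1, t) = 0) :
    ∀ x ∈ Ioc (0 : ℝ) 1, ∀ t > T + (1 - x) / a, u (x, t) = 0 := by
  intro x hx t ht
  rcases hx.2.eq_or_lt with rfl | hx1
  · exact hbc t (by simpa using ht)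
  have hu_cont := hu.continuous
  set t₀ := t - (1 - x) / a
  have hdist : a * (t - t₀) = 1 - x := by simp only [t₀]; field_simp; ring
  have ht₀ : t₀ < t := by nlinarith
  have hinside : ∀ s ∈ Ioo t₀ t, x + -a * (s - t) ∈ Ioo (0 : ℝ) 1 := fun s hs =>
    ⟨by nlinarith [hx.1, hs.2], by nlinarith [hs.1]⟩
  have hzero := eq_zero_of_norm_deriv_le_mul_norm_of_eq_zero_left (K := B) ht₀
    (f := fun s => u (x + -a * (s - t), s)) (by fun_prop)
    (fun s _ => hasDerivAt_comp_line_s13 (hu _))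
    (show u (x + -a * (t₀ - t), t₀) = 0 by
      rw [show x + -a * (t₀ - t) = 1 by linarith]
      exact hbc t₀ (by simp only [t₀]; linarith))
    (fun s hs => hpde _ (hinside s hs) s (by simp only [t₀] at hs; linarith [hs.1]))
  simpa using hzero

theorem eq_zero_on_Icc_of_leftTransport_of_eq_zero_at_one {u : ℝ × ℝ → ℝ} {B : ℝ} (ha : 0 < a)
    (hu : Differentiable ℝ u)
    (hpde : ∀ x ∈ Ioo (0 : ℝ) 1, ∀ t > T, |fderiv ℝ u (x, t) (-a, 1)| ≤ B * |u (x, t)|)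
    (hbc : ∀ t > T, u (1, t) = 0) :
    ∀ x ∈ Icc (0 : ℝ) 1, ∀ t > T + 1 / a, u (x, t) = 0 := by
  intro x hx t ht
  have hclosed : IsClosed {y : ℝ | u (y, t) = 0} :=
    isClosed_eq (hu.continuous.comp (by fun_prop)) continuous_const
  refine (hclosed.closure_subset_iff.2 fun y hy => ?_) (by rwa [closure_Ioc zero_ne_one])
  refine eq_zero_of_leftTransport_of_eq_zero_at_one ha hu hpde hbc y hy t (lt_of_le_of_lt ?_ ht)
  gcongr
  linarith [hy.1]

theorem eq_zero_of_rightTransport_of_eq_zero_at_zero {W : ℝ × ℝ → ℝ} (ha : 0 < a)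
    (hW : Differentiable ℝ W)
    (hpde : ∀ x ∈ Icc (0 : ℝ) 1, ∀ t > T, fderiv ℝ W (x, t) (a, 1) = 0)
    (hbc : ∀ t > T, W (0, t) = 0) :
    ∀ x ∈ Icc (0 : ℝ) 1, ∀ t > T + x / a, W (x, t) = 0 := by
  intro x hx t ht
  have hW_cont := hW.continuous
  set t₀ := t - x / a
  have hdist : a * (t - t₀) = x := by simp only [t₀]; field_simp; ring
  have ht₀ : t₀ ≤ t := by nlinarith [hx.1]
  have hconst := constant_of_has_deriv_right_zero (a := t₀) (b := t)
    (f := fun s => W (x + a * (s - t), s)) (by fun_prop) (fun s hs => by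
      have hinside : x + a * (s - t) ∈ Icc (0 : ℝ) 1 :=
        ⟨by nlinarith [hs.1], by nlinarith [hs.2, hx.2]⟩
      have hderiv := hasDerivAt_comp_line_s13 (c := a) (t := t) (hW (x + a * (s - t), s))
      rw [hpde _ hinside s (by simp only [t₀] at hs; linarith [hs.1])] at hderiv
      exact hderiv.hasDerivWithinAt) t ⟨ht₀, le_rfl⟩
  simpa [show x + a * (t₀ - t) = 0 by linarith, hbc t₀ (by simp only [t₀]; linarith)] using hconst

end Transport

theorem generalized_wave_finite_time_extinction_general
    (a p : ℝ) (ha : 0 < a)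
    (a₁ : ℝ → ℝ → ℝ)
    (ha₁b : ∃ B : ℝ, ∀ x ∈ Set.Icc (0:ℝ) 1, ∀ t ≥ (0:ℝ), |a₁ x t| ≤ B)
    (w : ℝ → ℝ → ℝ)
    (hw : ContDiff ℝ 2 (fun q : ℝ × ℝ => w q.1 q.2))
    -- (∂ₜ − a∂ₓ + a₁)(∂ₜ + a∂ₓ)w = 0 on (0,1)×(0,∞), i.e. u := ∂ₜw + a∂ₓw satisfies
    -- ∂ₜu − a∂ₓu + a₁·u = 0 there
    (hpde : ∀ x ∈ Set.Ioo (0:ℝ) 1, ∀ t > (0:ℝ),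
      deriv (fun s => deriv (w x) s + a * deriv (fun y => w y s) x) t
        - a * deriv (fun y => deriv (w y) t + a * deriv (fun z => w z t) y) x
        + a₁ x t * (deriv (w x) t + a * deriv (fun y => w y t) x) = 0)
    -- boundary condition at x = 0 : w(0,t) = p (wₜ + a wₓ)(0,t)
    (hbc0 : ∀ t > (0:ℝ),
      w 0 t = p * (deriv (w 0) t + a * deriv (fun y => w y t) 0))
    -- boundary condition at x = 1 : (wₜ + a wₓ)(1,t) = 0
    (hbc1 : ∀ t > (0:ℝ), deriv (w 1) t + a * deriv (fun y => w y t) 1 = 0) :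
    ∀ x ∈ Set.Icc (0:ℝ) 1, ∀ t > 2 / a, w x t = 0 := by
  obtain ⟨B, hB⟩ := ha₁b
  set W : ℝ × ℝ → ℝ := fun q => w q.1 q.2
  set U : ℝ × ℝ → ℝ := fun q => fderiv ℝ W q (a, 1)
  have hW : Differentiable ℝ W := hw.differentiable two_ne_zero
  have hU : Differentiable ℝ U :=
    ((hw.fderiv_right le_rfl).clm_apply contDiff_const).differentiable one_ne_zero
  have hWU : ∀ x t, deriv (w x) t + a * deriv (fun y => w y t) x = U (x, t) :=
    fun x t => deriv_add_mul_deriv_eq_fderiv (hW (x, t)) a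
  have hU_pde : ∀ x ∈ Ioo (0 : ℝ) 1, ∀ t > 0, |fderiv ℝ U (x, t) (-a, 1)| ≤ B * |U (x, t)| := by
    intro x hx t ht
    have hpde' := hpde x hx t ht
    simp only [hWU] at hpde'
    have hdir : fderiv ℝ U (x, t) (-a, 1) = -a₁ x t * U (x, t) := by
      rw [← deriv_add_mul_deriv_eq_fderiv (hU (x, t))]
      linarith
    rw [hdir, abs_mul, abs_neg]
    exact mul_le_mul_of_nonneg_right (hB x (Ioo_subset_Icc_self hx) t ht.le) (abs_nonneg _)
  have hU_zero := eq_zero_on_Icc_of_leftTransport_of_eq_zero_at_one ha hU hU_pde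
    fun t ht => (hWU 1 t).symm.trans (hbc1 t ht)
  intro x hx t ht
  refine eq_zero_of_rightTransport_of_eq_zero_at_zero (T := 1 / a) (W := W) ha hW
    (fun y hy s hs => hU_zero y hy s (by simpa using hs))
    (fun s hs => ?_) x hx t ?_
  · have hs0 : 0 < s := lt_trans (by positivity) hs
    simp only [W, hbc0 s hs0, hWU, hU_zero 0 ⟨le_rfl, zero_le_one⟩ s (by simpa using hs), mul_zero]
  · calc 1 / a + x / a ≤ 1 / a + 1 / a := by gcongr; exact hx.2
      _ = 2 / a := by ring
      _ < t := ht

/-- finite time extinction for the unperturbed generalized equation (18).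
Let `a > 0`, `p ∈ ℝ`, `a₁` continuous and bounded. If `w` is `C²` and
`u := ∂ₜw + a∂ₓw` satisfies `∂ₜu − a∂ₓu + a₁·u = 0` on `(0,1)×(0,∞)`, with boundary
conditions `w(0,t) = p·(wₜ + a wₓ)(0,t)` and `(wₜ + a wₓ)(1,t) = 0` for `t > 0`, then
`w(x,t) = 0` for all `x ∈ [0,1]` and `t > 2/a`. -/
theorem generalized_wave_finite_time_extinction
    (a p : ℝ) (ha : 0 < a)
    (a₁ : ℝ → ℝ → ℝ)
    (ha₁ : Continuous (fun q : ℝ × ℝ => a₁ q.1 q.2))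
    (ha₁b : ∃ B : ℝ, ∀ x ∈ Set.Icc (0:ℝ) 1, ∀ t ≥ (0:ℝ), |a₁ x t| ≤ B)
    (w : ℝ → ℝ → ℝ)
    (hw : ContDiff ℝ 2 (fun q : ℝ × ℝ => w q.1 q.2))
    -- (∂ₜ − a∂ₓ + a₁)(∂ₜ + a∂ₓ)w = 0 on (0,1)×(0,∞), i.e. u := ∂ₜw + a∂ₓw satisfies
    -- ∂ₜu − a∂ₓu + a₁·u = 0 there
    (hpde : ∀ x ∈ Set.Ioo (0:ℝ) 1, ∀ t > (0:ℝ),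
      deriv (fun s => deriv (w x) s + a * deriv (fun y => w y s) x) t
        - a * deriv (fun y => deriv (w y) t + a * deriv (fun z => w z t) y) x
        + a₁ x t * (deriv (w x) t + a * deriv (fun y => w y t) x) = 0)
    -- boundary condition at x = 0 : w(0,t) = p (wₜ + a wₓ)(0,t)
    (hbc0 : ∀ t > (0:ℝ),
      w 0 t = p * (deriv (w 0) t + a * deriv (fun y => w y t) 0))
    -- boundary condition at x = 1 : (wₜ + a wₓ)(1,t) = 0
    (hbc1 : ∀ t > (0:ℝ), deriv (w 1) t + a * deriv (fun y => w y t) 1 = 0) :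
    ∀ x ∈ Set.Icc (0:ℝ) 1, ∀ t > 2 / a, w x t = 0 :=
  generalized_wave_finite_time_extinction_general a p ha a₁ ha₁b w hw hpde hbc0 hbc1
end
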